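/- arXiv:2405.20124 — 4 statements merged into one kernel-verified Lean document; each statement's English description precedes it below -/
import Mathlib

section
/- Suppose the divergence generator d satisfies Assumptions 2, 3 and 4. Then the equation F(γ) = 0, where F(γ) = Σ_{i=1}^p d(s(γ, x̂_i), x̂_i) − ε, has a unique root on [0,∞), and this root is strictly positive. -/
open Matrix Set Filter MeasureTheory
open scoped BigOperators Classical

noncomputable section

/-- The space of real `p × p` matrices. -/
abbrev Mat (p : ℕ) := Matrix (Fin p) (Fin p) ℝ

/-- Orthogonal matrix. -/
def IsOrthoMat {p : ℕ} (V : Mat p) : Prop := V * Vᵀ = 1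

/-- The loss function `Tr(X²) − 2 Tr(Σ X)` of the estimation problem. -/
def cseLoss {p : ℕ} (X S : Mat p) : ℝ := (X * X).trace - 2 * (S * X).trace

/-- Squared Frobenius norm. -/
def frobSq {p : ℕ} (X : Mat p) : ℝ := (Xᵀ * X).trace

/-- Feasibility for the uncertainty set `B_ε(Σ̂)`. -/
def Feas {p : ℕ} (D : Mat p → Mat p → EReal) (Sh : Mat p) (ε : ℝ) (S : Mat p) : Prop :=
  S.PosSemidef ∧ D S Sh ≤ (ε : EReal)

/-- The worst-case (primal) objective of the problem (CSE). -/
def primalVal {p : ℕ} (D : Mat p → Mat p → EReal) (Sh : Mat p) (ε : ℝ) (X : Mat p) : EReal :=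
  ⨆ S : {S : Mat p // Feas D Sh ε S}, (cseLoss X S.1 : EReal)

/-- The inner (dual) objective. -/
def dualVal {p : ℕ} (S : Mat p) : EReal :=
  ⨅ X : {X : Mat p // X.PosSemidef}, (cseLoss X.1 S : EReal)

/-- `X` solves the primal problem (CSE). -/
def IsCSESol {p : ℕ} (D : Mat p → Mat p → EReal) (Sh : Mat p) (ε : ℝ) (X : Mat p) : Prop :=
  X.PosSemidef ∧ ∀ Y : Mat p, Y.PosSemidef → primalVal D Sh ε X ≤ primalVal D Sh ε Y

/-- `S` solves the dual problem. -/
def IsDualSol {p : ℕ} (D : Mat p → Mat p → EReal) (Sh : Mat p) (ε : ℝ) (S : Mat p) : Prop :=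
  Feas D Sh ε S ∧ ∀ T : Mat p, Feas D Sh ε T → dualVal T ≤ dualVal S

/-- `S` solves the problem (P_Mat). -/
def IsPMatSol {p : ℕ} (D : Mat p → Mat p → EReal) (Sh : Mat p) (ε : ℝ) (S : Mat p) : Prop :=
  Feas D Sh ε S ∧ ∀ T : Mat p, Feas D Sh ε T → frobSq S ≤ frobSq T

/-- Assumption 1 (minimax): the optimal value of (CSE) equals the optimal value of the dual. -/
def MinimaxEq {p : ℕ} (D : Mat p → Mat p → EReal) (Sh : Mat p) (ε : ℝ) : Prop :=
  (⨅ X : {X : Mat p // X.PosSemidef}, primalVal D Sh ε X.1)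
    = ⨆ S : {S : Mat p // Feas D Sh ε S}, dualVal S.1

/-- `x` solves the problem (P_Vec). -/
def IsPVecSol {p : ℕ} (d : ℝ → ℝ → EReal) (xh : Fin p → ℝ) (ε : ℝ) (x : Fin p → ℝ) : Prop :=
  (∀ i, 0 ≤ x i) ∧ (∑ i, d (x i) (xh i)) ≤ (ε : EReal) ∧
  ∀ y : Fin p → ℝ, (∀ i, 0 ≤ y i) → (∑ i, d (y i) (xh i)) ≤ (ε : EReal) →
    ∑ i, (x i) ^ 2 ≤ ∑ i, (y i) ^ 2

/-- `D` is a divergence: nonnegative, and zero iff the arguments coincide (on its domain). -/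
def DivergenceBasic {p : ℕ} (D : Mat p → Mat p → EReal) : Prop :=
  (∀ X Y : Mat p, 0 ≤ D X Y) ∧
  (∀ X Y : Mat p, X.PosSemidef → Y.PosSemidef → D X Y ≠ ⊤ → (D X Y = 0 ↔ X = Y))

/-- Assumption 2 (spectral divergence) for `D` with generator `d`:
(a) orthogonal equivariance, (b) spectrality with continuous generator, (c) rearrangement. -/
def Assumption2 {p : ℕ} (D : Mat p → Mat p → EReal) (d : ℝ → ℝ → EReal) : Prop :=
  (∀ X Y : Mat p, X.PosSemidef → Y.PosSemidef → ∀ V : Mat p, IsOrthoMat V →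
      D X Y = D (V * X * Vᵀ) (V * Y * Vᵀ)) ∧
  (∀ x y : Fin p → ℝ, (∀ i, 0 ≤ x i) → (∀ i, 0 ≤ y i) →
      D (Matrix.diagonal x) (Matrix.diagonal y) = ∑ i, d (x i) (y i)) ∧
  (∀ b : ℝ, 0 < b → ContinuousOn (fun a => d a b) (Set.Ici 0)) ∧
  (∀ x y : Fin p → ℝ, Monotone x → Monotone y → (∀ i, 0 ≤ x i) → (∀ i, 0 ≤ y i) →
    ∀ V : Mat p, IsOrthoMat V →
      D (Matrix.diagonal x) (Matrix.diagonal y)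
        ≤ D (V * Matrix.diagonal x * Vᵀ) (Matrix.diagonal y) ∧
      (D (V * Matrix.diagonal x * Vᵀ) (Matrix.diagonal y) ≠ ⊤ →
        (D (V * Matrix.diagonal x * Vᵀ) (Matrix.diagonal y)
            = D (Matrix.diagonal x) (Matrix.diagonal y)
          ↔ V * Matrix.diagonal x * Vᵀ = Matrix.diagonal x)))

/-- The generator-level part of Assumption 2: `d` is a spectral divergence on `ℝ₊`. -/
def GenBasic (d : ℝ → ℝ → EReal) : Prop :=
  (∀ a b : ℝ, 0 ≤ a → 0 ≤ b → 0 ≤ d a b) ∧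
  (∀ a b : ℝ, 0 ≤ a → 0 ≤ b → d a b ≠ ⊤ → (d a b = 0 ↔ a = b)) ∧
  (∀ b : ℝ, 0 < b → ContinuousOn (fun a => d a b) (Set.Ici 0))

/-- Assumption 3 (regularity of input parameters). -/
def Assumption3 {p : ℕ} (d : ℝ → ℝ → EReal) (xh : Fin p → ℝ) (ε : ℝ) : Prop :=
  (∀ i, d (xh i) (xh i) ≠ ⊤) ∧ 0 < ε ∧ (ε : EReal) < ∑ i, d 0 (xh i)

/-- Assumption 4 (smoothness and convexity of the generator): for every `b > 0`,
`a ↦ d(a,b)` is finite and twice continuously differentiable on `(0,∞)` with partial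
derivatives `d₁, d₂`, and convex on `[0,b]` (as an extended-real-valued function). -/
def Assumption4 (d : ℝ → ℝ → EReal) (d₁ d₂ : ℝ → ℝ → ℝ) : Prop :=
  (∀ a b : ℝ, 0 < a → 0 < b → d a b ≠ ⊤) ∧
  (∀ a b : ℝ, 0 < a → 0 < b → HasDerivAt (fun t => (d t b).toReal) (d₁ a b) a) ∧
  (∀ a b : ℝ, 0 < a → 0 < b → HasDerivAt (fun t => d₁ t b) (d₂ a b) a) ∧
  (∀ b : ℝ, 0 < b → ContinuousOn (fun a => d₂ a b) (Set.Ioi 0)) ∧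
  (∀ b : ℝ, 0 < b → ∀ a₁ ∈ Set.Icc (0:ℝ) b, ∀ a₂ ∈ Set.Icc (0:ℝ) b, ∀ t ∈ Set.Icc (0:ℝ) 1,
      d (t * a₁ + (1 - t) * a₂) b ≤ (t : EReal) * d a₁ b + ((1 - t : ℝ) : EReal) * d a₂ b)

/-- Assumption 5 (differential inequality): `d` is twice continuously differentiable on
`(0,∞)²` (mixed partial `d₁b` of `d₁` in `b` exists and the second partials are continuous)
and satisfies `a·∂²d/∂a² + b·∂²d/∂a∂b ≥ ∂d/∂a` for `0 < a < b`. -/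
def Assumption5 (d₁ d₂ d₁b : ℝ → ℝ → ℝ) : Prop :=
  (∀ a b : ℝ, 0 < a → 0 < b → HasDerivAt (fun t => d₁ a t) (d₁b a b) b) ∧
  ContinuousOn (fun q : ℝ × ℝ => d₂ q.1 q.2) (Set.Ioi 0 ×ˢ Set.Ioi 0) ∧
  ContinuousOn (fun q : ℝ × ℝ => d₁b q.1 q.2) (Set.Ioi 0 ×ˢ Set.Ioi 0) ∧
  (∀ a b : ℝ, 0 < a → a < b → d₁ a b ≤ a * d₂ a b + b * d₁b a b)

/-- The eigenvalue map `s`: for `γ, b > 0`, `s(γ,b)` is the unique `a ≥ 0` with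
`2a + γ·∂d/∂a(a,b) = 0`; and `s(γ,b) = 0` if `γ = 0` or `b = 0`. -/
def EigenMapSpec (d₁ s : ℝ → ℝ → ℝ) : Prop :=
  (∀ γ b : ℝ, γ = 0 ∨ b = 0 → s γ b = 0) ∧
  (∀ γ b : ℝ, 0 < γ → 0 < b →
    0 ≤ s γ b ∧ 2 * s γ b + γ * d₁ (s γ b) b = 0 ∧
    ∀ a : ℝ, 0 ≤ a → 2 * a + γ * d₁ a b = 0 → a = s γ b)

/-!
For `b > 0` the function `a ↦ d(a,b)` is convex on `(0,b]` and vanishes only at `b`, so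
`∂d/∂a(·,b)` is nondecreasing, negative on `(0,b)` and zero at `b`. Hence `γ ↦ s(γ,b)` is a
strictly increasing bijection of `(0,∞)` onto `(0,b)`, namely the inverse of
`a ↦ 2a / (-∂d/∂a(a,b))`; in particular it is continuous, tends to `0` as `γ → 0⁺` and to `b`
as `γ → ∞`. Composing with the strictly decreasing `d(·,b)`, the function
`γ ↦ Σᵢ d(s(γ,x̂ᵢ),x̂ᵢ)` is finite, continuous and strictly decreasing on `(0,∞)` (some `x̂ᵢ` is
positive because `ε > 0`), tends to `Σᵢ d(0,x̂ᵢ) > ε` at `0⁺` and to `0 < ε` at `∞`. The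
intermediate value theorem gives the root, and `γ = 0` is not one since `s(0,·) = 0`.
-/

open Topology

theorem EReal.coe_finsetSum {ι : Type*} (t : Finset ι) (g : ι → ℝ) :
    ((∑ i ∈ t, g i : ℝ) : EReal) = ∑ i ∈ t, (g i : EReal) :=
  map_sum (⟨⟨(↑), EReal.coe_zero⟩, EReal.coe_add⟩ : ℝ →+ EReal) g t

theorem EReal.tendsto_finsetSum {ι α : Type*} {l : Filter α} {f : ι → α → EReal}
    {g : ι → EReal} (t : Finset ι) (hf : ∀ i ∈ t, Tendsto (f i) l (𝓝 (g i)))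
    (hg : ∀ i ∈ t, g i ≠ ⊥) :
    Tendsto (fun x => ∑ i ∈ t, f i x) l (𝓝 (∑ i ∈ t, g i)) := by
  induction t using Finset.cons_induction with
  | empty => simpa using tendsto_const_nhds
  | cons a t ha ih =>
    rw [Finset.forall_mem_cons] at hf hg
    simp only [Finset.sum_cons]
    have hsum : ∑ i ∈ t, g i ≠ ⊥ := Finset.sum_induction g (· ≠ ⊥)
      (fun _ _ hx hy => EReal.add_ne_bot_iff.2 ⟨hx, hy⟩) EReal.zero_ne_bot hg.2
    exact (EReal.continuousAt_add (Or.inr hsum) (Or.inl hg.1)).tendsto.comp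
      (hf.1.prodMk_nhds (ih hf.2 hg.2))

namespace SpectralDivergence

variable {d : ℝ → ℝ → EReal} {d₁ d₂ s : ℝ → ℝ → ℝ} {a b γ : ℝ}

theorem d_ne_bot (hgen : GenBasic d) (ha : 0 ≤ a) (hb : 0 ≤ b) : d a b ≠ ⊥ :=
  ne_bot_of_le_ne_bot EReal.zero_ne_bot (hgen.1 a b ha hb)

theorem d_self (hgen : GenBasic d) (hb : 0 ≤ b) (hbb : d b b ≠ ⊤) : d b b = 0 :=
  (hgen.2.1 b b hb hb hbb).2 rfl

theorem coe_toReal_d (hgen : GenBasic d) (hA4 : Assumption4 d d₁ d₂) (ha : 0 < a) (hb : 0 < b) :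
    ((d a b).toReal : EReal) = d a b :=
  EReal.coe_toReal (hA4.1 a b ha hb) (d_ne_bot hgen ha.le hb.le)

theorem toReal_d_self (hgen : GenBasic d) (hA4 : Assumption4 d d₁ d₂) (hb : 0 < b) :
    (d b b).toReal = 0 := by
  rw [d_self hgen hb.le (hA4.1 b b hb hb), EReal.toReal_zero]

theorem toReal_d_pos (hgen : GenBasic d) (hA4 : Assumption4 d d₁ d₂) (ha : 0 < a) (hab : a < b) :
    0 < (d a b).toReal := by
  have hb : 0 < b := ha.trans hab
  have hne : d a b ≠ 0 := fun h => hab.ne ((hgen.2.1 a b ha.le hb.le (hA4.1 a b ha hb)).1 h)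
  rw [← EReal.coe_lt_coe_iff, coe_toReal_d hgen hA4 ha hb, EReal.coe_zero]
  exact (hgen.1 a b ha.le hb.le).lt_of_ne' hne

theorem convexOn_toReal_d (hgen : GenBasic d) (hA4 : Assumption4 d d₁ d₂) (hb : 0 < b) :
    ConvexOn ℝ (Ioc 0 b) (fun a => (d a b).toReal) := by
  refine ⟨convex_Ioc 0 b, ?_⟩
  rintro x ⟨hx0, hxb⟩ y ⟨hy0, hyb⟩ t u ht hu htu
  obtain rfl : u = 1 - t := by linarith
  have hxy : 0 < t * x + (1 - t) * y := by
    rcases ht.eq_or_lt with rfl | ht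
    · simpa using hy0
    · nlinarith [mul_nonneg hu hy0.le]
  have key := hA4.2.2.2.2 b hb x ⟨hx0.le, hxb⟩ y ⟨hy0.le, hyb⟩ t ⟨ht, by linarith⟩
  rw [← coe_toReal_d hgen hA4 hx0 hb, ← coe_toReal_d hgen hA4 hy0 hb,
    ← coe_toReal_d hgen hA4 hxy hb, ← EReal.coe_mul, ← EReal.coe_mul, ← EReal.coe_add] at key
  exact EReal.coe_le_coe_iff.1 key

theorem d₁_self (hgen : GenBasic d) (hA4 : Assumption4 d d₁ d₂) (hb : 0 < b) : d₁ b b = 0 := by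
  have hmin : IsLocalMin (fun a => (d a b).toReal) b := by
    filter_upwards [Ioi_mem_nhds hb] with a ha
    rw [toReal_d_self hgen hA4 hb]
    exact EReal.toReal_nonneg (hgen.1 a b (le_of_lt ha) hb.le)
  exact hmin.hasDerivAt_eq_zero (hA4.2.1 b b hb hb)

theorem d₁_monotoneOn (hgen : GenBasic d) (hA4 : Assumption4 d d₁ d₂) (hb : 0 < b) :
    MonotoneOn (fun a => d₁ a b) (Ioc 0 b) := by
  intro x hx y hy hxy
  rcases hxy.eq_or_lt with rfl | hxy
  · exact le_rfl
  have hf := convexOn_toReal_d hgen hA4 hb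
  exact (hf.le_slope_of_hasDerivAt hx hy hxy (hA4.2.1 x b hx.1 hb)).trans
    (hf.slope_le_of_hasDerivAt hx hy hxy (hA4.2.1 y b hy.1 hb))

theorem d₁_neg (hgen : GenBasic d) (hA4 : Assumption4 d d₁ d₂) (ha : a ∈ Ioo 0 b) :
    d₁ a b < 0 := by
  have hb : 0 < b := ha.1.trans ha.2
  have hslope : slope (fun t => (d t b).toReal) a b < 0 := by
    rw [slope_def_field, toReal_d_self hgen hA4 hb]
    exact div_neg_of_neg_of_pos (by linarith [toReal_d_pos hgen hA4 ha.1 ha.2]) (by linarith [ha.2])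
  exact ((convexOn_toReal_d hgen hA4 hb).le_slope_of_hasDerivAt ⟨ha.1, ha.2.le⟩
    ⟨hb, le_rfl⟩ ha.2 (hA4.2.1 a b ha.1 hb)).trans_lt hslope

theorem strictAntiOn_toReal_d (hgen : GenBasic d) (hA4 : Assumption4 d d₁ d₂) (hb : 0 < b) :
    StrictAntiOn (fun a => (d a b).toReal) (Ioc 0 b) := by
  refine strictAntiOn_of_deriv_neg (convex_Ioc 0 b)
    (fun a ha => (hA4.2.1 a b ha.1 hb).continuousAt.continuousWithinAt) fun a ha => ?_
  rw [interior_Ioc] at ha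
  rw [(hA4.2.1 a b ha.1 hb).deriv]
  exact d₁_neg hgen hA4 ha

theorem s_nonneg (hs : EigenMapSpec d₁ s) (hγ : 0 ≤ γ) (hb : 0 ≤ b) : 0 ≤ s γ b := by
  rcases hγ.eq_or_lt with rfl | hγ
  · rw [hs.1 0 b (Or.inl rfl)]
  rcases hb.eq_or_lt with rfl | hb
  · rw [hs.1 γ 0 (Or.inr rfl)]
  exact (hs.2 γ b hγ hb).1

theorem s_mem_Ioo (hgen : GenBasic d) (hA4 : Assumption4 d d₁ d₂) (hs : EigenMapSpec d₁ s)
    (hγ : 0 < γ) (hb : 0 < b) : s γ b ∈ Ioo 0 b := by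
  set g := fun a => 2 * a + γ * d₁ a b
  have hmid : b / 2 ∈ Ioo 0 b := ⟨by positivity, by linarith⟩
  have hδ : 0 < -d₁ (b / 2) b := neg_pos.2 (d₁_neg hgen hA4 hmid)
  -- `g a ≤ 2a + γ d₁(b/2, b)` for `a ≤ b/2`, so `g` is negative near `0`, while `g b = 2b > 0`.
  set a₀ := min (b / 2) (γ * -d₁ (b / 2) b / 4)
  have ha₀ : 0 < a₀ := lt_min hmid.1 (by positivity)
  have ha₀b : a₀ ≤ b := (min_le_left _ _).trans hmid.2.le
  have hga₀ : g a₀ < 0 := by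
    have h₁ : d₁ a₀ b ≤ d₁ (b / 2) b := d₁_monotoneOn hgen hA4 hb
      ⟨ha₀, ha₀b⟩ ⟨hmid.1, hmid.2.le⟩ (min_le_left _ _)
    have h₂ : a₀ ≤ γ * -d₁ (b / 2) b / 4 := min_le_right _ _
    have h₃ := mul_le_mul_of_nonneg_left h₁ hγ.le
    have h₄ := mul_pos hγ hδ
    simp only [g]
    linarith
  have hgb : 0 < g b := by simp only [g, d₁_self hgen hA4 hb]; linarith
  have hcont : ContinuousOn g (Icc a₀ b) := fun x hx =>
    ((continuousAt_id.const_mul 2).add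
      ((hA4.2.2.1 x b (ha₀.trans_le hx.1) hb).continuousAt.const_mul γ)).continuousWithinAt
  obtain ⟨x, hx, hgx⟩ := intermediate_value_Icc ha₀b hcont ⟨hga₀.le, hgb.le⟩
  have hxb : x ≠ b := by rintro rfl; exact hgb.ne' hgx
  rw [← (hs.2 γ b hγ hb).2.2 x (ha₀.trans_le hx.1).le hgx]
  exact ⟨ha₀.trans_le hx.1, hx.2.lt_of_ne hxb⟩

theorem s_eq_of_mem_Ioo (hgen : GenBasic d) (hA4 : Assumption4 d d₁ d₂) (hs : EigenMapSpec d₁ s)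
    (ha : a ∈ Ioo 0 b) : 0 < 2 * a / -d₁ a b ∧ s (2 * a / -d₁ a b) b = a := by
  have hd : 0 < -d₁ a b := neg_pos.2 (d₁_neg hgen hA4 ha)
  have hγ : 0 < 2 * a / -d₁ a b := div_pos (by linarith [ha.1]) hd
  refine ⟨hγ, ((hs.2 _ b hγ (ha.1.trans ha.2)).2.2 a ha.1.le ?_).symm⟩
  have hne : d₁ a b ≠ 0 := (neg_pos.1 hd).ne
  field_simp
  ring

theorem s_strictMonoOn (hgen : GenBasic d) (hA4 : Assumption4 d d₁ d₂) (hs : EigenMapSpec d₁ s)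
    (hb : 0 < b) : StrictMonoOn (fun γ => s γ b) (Ioi 0) := by
  intro γ hγ γ' hγ' hlt
  by_contra! hle
  have hm := s_mem_Ioo hgen hA4 hs hγ hb
  have hm' := s_mem_Ioo hgen hA4 hs hγ' hb
  have hd₁ : d₁ (s γ' b) b ≤ d₁ (s γ b) b :=
    d₁_monotoneOn hgen hA4 hb ⟨hm'.1, hm'.2.le⟩ ⟨hm.1, hm.2.le⟩ hle
  have hneg : 0 < -d₁ (s γ b) b := neg_pos.2 (d₁_neg hgen hA4 hm)
  have hroot := (hs.2 γ b hγ hb).2.1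
  have hroot' := (hs.2 γ' b hγ' hb).2.1
  have : 2 * s γ b < 2 * s γ' b :=
    calc 2 * s γ b = γ * -d₁ (s γ b) b := by linarith
      _ < γ' * -d₁ (s γ b) b := mul_lt_mul_of_pos_right hlt hneg
      _ ≤ γ' * -d₁ (s γ' b) b := mul_le_mul_of_nonneg_left (by linarith) (le_of_lt hγ')
      _ = 2 * s γ' b := by linarith
  linarith

theorem image_s_Ioi (hgen : GenBasic d) (hA4 : Assumption4 d d₁ d₂) (hs : EigenMapSpec d₁ s)
    (hb : 0 < b) : (fun γ => s γ b) '' Ioi 0 = Ioo 0 b := by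
  refine Subset.antisymm ?_ fun a ha => ?_
  · rintro _ ⟨γ, hγ, rfl⟩
    exact s_mem_Ioo hgen hA4 hs hγ hb
  · obtain ⟨hγ, hsa⟩ := s_eq_of_mem_Ioo hgen hA4 hs ha
    exact ⟨_, hγ, hsa⟩

theorem s_continuousAt (hgen : GenBasic d) (hA4 : Assumption4 d d₁ d₂) (hs : EigenMapSpec d₁ s)
    (hγ : 0 < γ) (hb : 0 < b) : ContinuousAt (fun γ => s γ b) γ := by
  refine (s_strictMonoOn hgen hA4 hs hb).continuousAt_of_image_mem_nhds (Ioi_mem_nhds hγ) ?_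
  rw [image_s_Ioi hgen hA4 hs hb]
  exact Ioo_mem_nhds (s_mem_Ioo hgen hA4 hs hγ hb).1 (s_mem_Ioo hgen hA4 hs hγ hb).2

theorem tendsto_s_nhdsGT_zero (hgen : GenBasic d) (hA4 : Assumption4 d d₁ d₂)
    (hs : EigenMapSpec d₁ s) (hb : 0 < b) : Tendsto (fun γ => s γ b) (𝓝[>] 0) (𝓝 0) := by
  have hs0 : s 0 b = 0 := hs.1 0 b (Or.inl rfl)
  have hmono : StrictMonoOn (fun γ => s γ b) (Ici 0) := by
    intro x hx y hy hxy
    rcases (show (0 : ℝ) ≤ x from hx).eq_or_lt with rfl | hx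
    · simpa only [hs0] using (s_mem_Ioo hgen hA4 hs hxy hb).1
    · exact s_strictMonoOn hgen hA4 hs hb hx (hx.trans hxy) hxy
  have himage : (fun γ => s γ b) '' Ici 0 = Ico 0 b := by
    rw [← Ioi_insert, image_insert_eq, image_s_Ioi hgen hA4 hs hb, hs0, Ioo_insert_left hb]
  have hcont := hmono.continuousWithinAt_right_of_image_mem_nhdsWithin self_mem_nhdsWithin
    (by rw [himage, hs0]; exact Ico_mem_nhdsGE hb)
  have := hcont.tendsto.mono_left (nhdsWithin_mono _ Ioi_subset_Ici_self)
  rwa [hs0] at this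

theorem tendsto_s_atTop (hgen : GenBasic d) (hA4 : Assumption4 d d₁ d₂) (hs : EigenMapSpec d₁ s)
    (hb : 0 < b) : Tendsto (fun γ => s γ b) atTop (𝓝 b) := by
  refine tendsto_order.2 ⟨fun c hc => ?_, fun c hc => ?_⟩
  · obtain ⟨a, hca, hab⟩ := exists_between (max_lt hc hb)
    have ha : a ∈ Ioo 0 b := ⟨(le_max_right c 0).trans_lt hca, hab⟩
    obtain ⟨hγa, hsa⟩ := s_eq_of_mem_Ioo hgen hA4 hs ha
    filter_upwards [eventually_gt_atTop (2 * a / -d₁ a b)] with γ hγ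
    calc c < a := (le_max_left c 0).trans_lt hca
      _ = s _ b := hsa.symm
      _ < s γ b := s_strictMonoOn hgen hA4 hs hb hγa (hγa.trans hγ) hγ
  · filter_upwards [eventually_gt_atTop 0] with γ hγ
    exact (s_mem_Ioo hgen hA4 hs hγ hb).2.trans hc

theorem d_s_ne_top (hgen : GenBasic d) (hA4 : Assumption4 d d₁ d₂) (hs : EigenMapSpec d₁ s)
    (hγ : 0 < γ) (hb : 0 ≤ b) (hbb : d b b ≠ ⊤) : d (s γ b) b ≠ ⊤ := by
  rcases hb.eq_or_lt with rfl | hb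
  · rwa [hs.1 γ 0 (Or.inr rfl)]
  · exact hA4.1 _ b (s_mem_Ioo hgen hA4 hs hγ hb).1 hb

theorem continuousOn_toReal_d_s (hgen : GenBasic d) (hA4 : Assumption4 d d₁ d₂)
    (hs : EigenMapSpec d₁ s) (hb : 0 ≤ b) :
    ContinuousOn (fun γ => (d (s γ b) b).toReal) (Ioi 0) := by
  rcases hb.eq_or_lt with rfl | hb
  · simp only [hs.1 _ 0 (Or.inr rfl)]
    exact continuousOn_const
  · intro γ hγ
    exact ((hA4.2.1 _ b (s_mem_Ioo hgen hA4 hs hγ hb).1 hb).continuousAt.comp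
      (f := fun γ => s γ b) (s_continuousAt hgen hA4 hs hγ hb)).continuousWithinAt

theorem strictAntiOn_toReal_d_s (hgen : GenBasic d) (hA4 : Assumption4 d d₁ d₂)
    (hs : EigenMapSpec d₁ s) (hb : 0 < b) :
    StrictAntiOn (fun γ => (d (s γ b) b).toReal) (Ioi 0) :=
  (strictAntiOn_toReal_d hgen hA4 hb).comp_strictMonoOn (s_strictMonoOn hgen hA4 hs hb)
    fun _ hγ => ⟨(s_mem_Ioo hgen hA4 hs hγ hb).1, (s_mem_Ioo hgen hA4 hs hγ hb).2.le⟩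

theorem tendsto_d_s_nhdsGT_zero (hgen : GenBasic d) (hA4 : Assumption4 d d₁ d₂)
    (hs : EigenMapSpec d₁ s) (hb : 0 ≤ b) :
    Tendsto (fun γ => d (s γ b) b) (𝓝[>] 0) (𝓝 (d 0 b)) := by
  rcases hb.eq_or_lt with rfl | hb
  · simp only [hs.1 _ 0 (Or.inr rfl)]
    exact tendsto_const_nhds
  refine ((hgen.2.2 b hb) 0 self_mem_Ici).tendsto.comp (tendsto_nhdsWithin_iff.2
    ⟨tendsto_s_nhdsGT_zero hgen hA4 hs hb, ?_⟩)
  filter_upwards [self_mem_nhdsWithin] with γ hγ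
  exact s_nonneg hs (le_of_lt hγ) hb.le

theorem tendsto_toReal_d_s_atTop (hgen : GenBasic d) (hA4 : Assumption4 d d₁ d₂)
    (hs : EigenMapSpec d₁ s) (hb : 0 ≤ b) (hbb : d b b ≠ ⊤) :
    Tendsto (fun γ => (d (s γ b) b).toReal) atTop (𝓝 0) := by
  rcases hb.eq_or_lt with rfl | hb
  · simp only [hs.1 _ 0 (Or.inr rfl), d_self hgen le_rfl hbb, EReal.toReal_zero]
    exact tendsto_const_nhds
  rw [← toReal_d_self hgen hA4 hb]
  exact (hA4.2.1 b b hb hb).continuousAt.tendsto.comp (tendsto_s_atTop hgen hA4 hs hb)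

theorem antitoneOn_toReal_d_s (hgen : GenBasic d) (hA4 : Assumption4 d d₁ d₂)
    (hs : EigenMapSpec d₁ s) (hb : 0 ≤ b) :
    AntitoneOn (fun γ => (d (s γ b) b).toReal) (Ioi 0) := by
  rcases hb.eq_or_lt with rfl | hb
  · intro γ _ γ' _ _
    simp only [hs.1 _ 0 (Or.inr rfl), le_rfl]
  · exact (strictAntiOn_toReal_d_s hgen hA4 hs hb).antitoneOn

section Sum

variable {p : ℕ} {xh : Fin p → ℝ}

theorem sum_d_s_eq_coe (hgen : GenBasic d) (hA4 : Assumption4 d d₁ d₂) (hs : EigenMapSpec d₁ s)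
    (hxh : ∀ i, 0 ≤ xh i) (hfin : ∀ i, d (xh i) (xh i) ≠ ⊤) (hγ : 0 < γ) :
    ∑ i, d (s γ (xh i)) (xh i) = ((∑ i, (d (s γ (xh i)) (xh i)).toReal : ℝ) : EReal) := by
  rw [EReal.coe_finsetSum]
  refine Finset.sum_congr rfl fun i _ => (EReal.coe_toReal ?_ ?_).symm
  · exact d_s_ne_top hgen hA4 hs hγ (hxh i) (hfin i)
  · exact d_ne_bot hgen (s_nonneg hs hγ.le (hxh i)) (hxh i)

theorem strictAntiOn_sum_toReal_d_s (hgen : GenBasic d) (hA4 : Assumption4 d d₁ d₂)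
    (hs : EigenMapSpec d₁ s) (hxh : ∀ i, 0 ≤ xh i) (hj : ∃ j, 0 < xh j) :
    StrictAntiOn (fun γ => ∑ i, (d (s γ (xh i)) (xh i)).toReal) (Ioi 0) := by
  intro γ hγ γ' hγ' hlt
  obtain ⟨j, hj⟩ := hj
  exact Finset.sum_lt_sum (fun i _ => antitoneOn_toReal_d_s hgen hA4 hs (hxh i) hγ hγ' hlt.le)
    ⟨j, Finset.mem_univ j, strictAntiOn_toReal_d_s hgen hA4 hs hj hγ hγ' hlt⟩

theorem continuousOn_sum_toReal_d_s (hgen : GenBasic d) (hA4 : Assumption4 d d₁ d₂)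
    (hs : EigenMapSpec d₁ s) (hxh : ∀ i, 0 ≤ xh i) :
    ContinuousOn (fun γ => ∑ i, (d (s γ (xh i)) (xh i)).toReal) (Ioi 0) :=
  continuousOn_finsetSum _ fun i _ => continuousOn_toReal_d_s hgen hA4 hs (hxh i)

theorem tendsto_sum_toReal_d_s_atTop (hgen : GenBasic d) (hA4 : Assumption4 d d₁ d₂)
    (hs : EigenMapSpec d₁ s) (hxh : ∀ i, 0 ≤ xh i) (hfin : ∀ i, d (xh i) (xh i) ≠ ⊤) :
    Tendsto (fun γ => ∑ i, (d (s γ (xh i)) (xh i)).toReal) atTop (𝓝 0) := by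
  simpa using tendsto_finsetSum Finset.univ fun i _ =>
    tendsto_toReal_d_s_atTop hgen hA4 hs (hxh i) (hfin i)

theorem eventually_lt_sum_d_s_nhdsGT_zero (hgen : GenBasic d) (hA4 : Assumption4 d d₁ d₂)
    (hs : EigenMapSpec d₁ s) (hxh : ∀ i, 0 ≤ xh i) {c : EReal} (hc : c < ∑ i, d 0 (xh i)) :
    ∀ᶠ γ in 𝓝[>] 0, c < ∑ i, d (s γ (xh i)) (xh i) :=
  (EReal.tendsto_finsetSum Finset.univ (fun i _ => tendsto_d_s_nhdsGT_zero hgen hA4 hs (hxh i))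
    fun i _ => d_ne_bot hgen le_rfl (hxh i)).eventually (lt_mem_nhds hc)

theorem exists_pos_of_lt_sum_d_zero (hgen : GenBasic d) (hxh : ∀ i, 0 ≤ xh i)
    (hfin : ∀ i, d (xh i) (xh i) ≠ ⊤) {ε : ℝ} (hε : 0 < ε) (hlt : (ε : EReal) < ∑ i, d 0 (xh i)) :
    ∃ j, 0 < xh j := by
  by_contra! hall
  have hzero : ∀ i, d 0 (xh i) = 0 := fun i => by
    have hii := hfin i
    rw [le_antisymm (hall i) (hxh i)] at hii ⊢
    exact d_self hgen le_rfl hii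
  simp only [hzero, Finset.sum_const_zero] at hlt
  exact hε.not_ge (EReal.coe_le_coe_iff.1 hlt.le)

end Sum

end SpectralDivergence

open SpectralDivergence

theorem stmt_13_general {p : ℕ}
    (d : ℝ → ℝ → EReal) (d₁ d₂ s : ℝ → ℝ → ℝ)
    (xh : Fin p → ℝ) (ε : ℝ)
    (hnn : ∀ i, 0 ≤ xh i)
    (hgen : GenBasic d)
    (hA3 : Assumption3 d xh ε)
    (hA4 : Assumption4 d d₁ d₂)
    (hs : EigenMapSpec d₁ s) :
    (∃! γ : ℝ, 0 ≤ γ ∧ (∑ i, d (s γ (xh i)) (xh i)) = (ε : EReal)) ∧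
    (∀ γ : ℝ, 0 ≤ γ → (∑ i, d (s γ (xh i)) (xh i)) = (ε : EReal) → 0 < γ) := by
  obtain ⟨hfin, hε, hlt⟩ := hA3
  set F := fun γ => ∑ i, (d (s γ (xh i)) (xh i)).toReal
  have hF : ∀ γ, 0 < γ → ∑ i, d (s γ (xh i)) (xh i) = F γ := fun γ hγ =>
    sum_d_s_eq_coe hgen hA4 hs hnn hfin hγ
  have hroot_pos : ∀ γ : ℝ, 0 ≤ γ → ∑ i, d (s γ (xh i)) (xh i) = ε → 0 < γ := by
    rintro γ hγ hroot
    refine hγ.lt_of_ne fun h => hlt.ne' ?_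
    simpa [← h, hs.1 0 _ (Or.inl rfl)] using hroot
  obtain ⟨γ₁, hF₁, hγ₁⟩ := ((eventually_lt_sum_d_s_nhdsGT_zero hgen hA4 hs hnn hlt).and
    self_mem_nhdsWithin).exists
  rw [hF γ₁ hγ₁, EReal.coe_lt_coe_iff] at hF₁
  obtain ⟨γ₂, hF₂, hγ₁₂⟩ := ((tendsto_sum_toReal_d_s_atTop hgen hA4 hs hnn hfin).eventually
    (gt_mem_nhds hε)).and (eventually_gt_atTop γ₁) |>.exists
  obtain ⟨γ, hγ, hFγ⟩ := intermediate_value_Icc' hγ₁₂.le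
    ((continuousOn_sum_toReal_d_s hgen hA4 hs hnn).mono fun x hx => hγ₁.trans_le hx.1)
    ⟨hF₂.le, hF₁.le⟩
  change F γ = ε at hFγ
  have hγ₀ : 0 < γ := hγ₁.trans_le hγ.1
  refine ⟨⟨γ, ⟨hγ₀.le, by rw [hF γ hγ₀, hFγ]⟩, fun γ' ⟨hγ', hroot⟩ => ?_⟩, hroot_pos⟩
  have hγ'₀ := hroot_pos γ' hγ' hroot
  rw [hF γ' hγ'₀, EReal.coe_eq_coe_iff, ← hFγ] at hroot
  exact (strictAntiOn_sum_toReal_d_s hgen hA4 hs hnn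
    (exists_pos_of_lt_sum_d_zero hgen hnn hfin hε hlt)).injOn hγ'₀ hγ₀ hroot

/-- Lemma: unique root of `F`.
Under Assumptions 2, 3 and 4 for the generator, the equation
`F(γ) = Σᵢ d(s(γ,x̂ᵢ),x̂ᵢ) − ε = 0` has a unique root on `[0,∞)`, and this root is
strictly positive. -/
theorem stmt_13 {p : ℕ}
    (d : ℝ → ℝ → EReal) (d₁ d₂ s : ℝ → ℝ → ℝ)
    (xh : Fin p → ℝ) (ε : ℝ)
    (hmono : Monotone xh) (hnn : ∀ i, 0 ≤ xh i)
    (hgen : GenBasic d)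
    (hA3 : Assumption3 d xh ε)
    (hA4 : Assumption4 d d₁ d₂)
    (hs : EigenMapSpec d₁ s) :
    (∃! γ : ℝ, 0 ≤ γ ∧ (∑ i, d (s γ (xh i)) (xh i)) = (ε : EReal)) ∧
    (∀ γ : ℝ, 0 ≤ γ → (∑ i, d (s γ (xh i)) (xh i)) = (ε : EReal) → 0 < γ) :=
  stmt_13_general d d₁ d₂ s xh ε hnn hgen hA3 hA4 hs
end
end

section
/- Suppose the divergence generator d satisfies Assumptions 2, 3 and 4 for every radius ε ∈ (0, ε̄), where ε̄ = Σ_i d(0, x̂_i). For each ε ∈ (0, ε̄) let γ*(ε) denote the unique positive root of the equation Σ_{i=1}^p d(s(γ, x̂_i), x̂_i) = ε. Then the function ε ↦ γ*(ε) is non-increasing on (0, ε̄). -/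
open Matrix Set Filter MeasureTheory
open scoped BigOperators Classical

noncomputable section

/-!
For `b > 0` the function `a ↦ d(a,b)` is convex on `(0,b]` with minimum `0` at `a = b`, so
`∂d/∂a(·,b)` is nondecreasing there, negative on `(0,b)` and zero at `b`. Hence
`t ↦ 2t + γ ∂d/∂a(t,b)` is negative near `0` and positive at `b`, and its unique root `s(γ,b)`
lies in `(0,b)`. Comparing the root equations for `γ₁ ≤ γ₂` through the monotonicity of
`∂d/∂a(·,b)` gives `s(γ₁,b) ≤ s(γ₂,b)`, and since `d(·,b)` decreases on `(0,b]`, every term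
`d(s(γ,x̂ᵢ),x̂ᵢ)` is nonincreasing in `γ`: a larger `γ` can only reach a smaller `ε`.
-/

section RealConvex

variable {f : ℝ → ℝ} {a b : ℝ}

theorem ConvexOn.antitoneOn_Ioc_of_le_right (hf : ConvexOn ℝ (Ioc a b) f)
    (hmin : ∀ x ∈ Ioc a b, f b ≤ f x) : AntitoneOn f (Ioc a b) := by
  intro x hx y hy hxy
  rcases hy.2.eq_or_lt with rfl | hyb
  · exact hmin x hx
  · exact hf.le_left_of_right_le'' hx (right_mem_Ioc.2 (hx.1.trans_le hx.2)) hxy hyb (hmin y hy)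

theorem ConvexOn.monotoneOn_of_hasDerivAt {S : Set ℝ} {f' : ℝ → ℝ} (hf : ConvexOn ℝ S f)
    (hf' : ∀ x ∈ S, HasDerivAt f (f' x) x) : MonotoneOn f' S := by
  intro x hx y hy hxy
  rcases hxy.eq_or_lt with rfl | hxy
  · rfl
  · exact (hf.le_slope_of_hasDerivAt hx hy hxy (hf' x hx)).trans
      (hf.slope_le_of_hasDerivAt hx hy hxy (hf' y hy))

theorem ConvexOn.neg_of_hasDerivAt_of_lt_right {S : Set ℝ} {f' : ℝ} (hf : ConvexOn ℝ S f)
    (ha : a ∈ S) (hb : b ∈ S) (hab : a < b) (hfab : f b < f a) (hf' : HasDerivAt f f' a) :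
    f' < 0 := by
  refine (hf.le_slope_of_hasDerivAt ha hb hab hf').trans_lt ?_
  rw [slope_def_field]
  exact div_neg_of_neg_of_pos (by linarith) (by linarith)

theorem exists_mem_Ioo_two_mul_add_mul_eq_zero {g : ℝ → ℝ} {b c γ : ℝ} (hγ : 0 < γ)
    (hc : c ∈ Ioo 0 b) (hcont : ContinuousOn g (Ioc 0 b)) (hmono : MonotoneOn g (Ioc 0 b))
    (hgc : g c < 0) (hgb : 0 ≤ g b) : ∃ r ∈ Ioo 0 b, 2 * r + γ * g r = 0 := by
  -- for `t ≤ c`, `2t + γ g t ≤ 2t + γ g c`, which is negative once `t < -γ g c / 2`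
  set t₀ := min c (-(γ * g c) / 4)
  have ht₀ : 0 < t₀ := lt_min hc.1 (by nlinarith)
  have ht₀c : t₀ ≤ c := min_le_left _ _
  have hneg : 2 * t₀ + γ * g t₀ < 0 := by
    have hgt₀ : g t₀ ≤ g c := hmono ⟨ht₀, ht₀c.trans hc.2.le⟩ ⟨hc.1, hc.2.le⟩ ht₀c
    have ht₀le : t₀ ≤ -(γ * g c) / 4 := min_le_right _ _
    nlinarith
  have hpos : 0 < 2 * b + γ * g b := by nlinarith [hc.1.trans hc.2]
  have hcont' : ContinuousOn (fun t => 2 * t + γ * g t) (Icc t₀ b) :=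
    (continuousOn_const.mul continuousOn_id).add
      (continuousOn_const.mul (hcont.mono fun t ht => ⟨ht₀.trans_le ht.1, ht.2⟩))
  obtain ⟨r, hr, hr0⟩ := intermediate_value_Ioo (ht₀c.trans hc.2.le) hcont' ⟨hneg, hpos⟩
  exact ⟨r, ⟨ht₀.trans hr.1, hr.2⟩, hr0⟩

theorem le_of_two_mul_add_mul_eq_zero {g : ℝ → ℝ} {b γ₁ γ₂ a₁ a₂ : ℝ} (hγ₁ : 0 < γ₁)
    (hγ : γ₁ ≤ γ₂) (hmono : MonotoneOn g (Ioc 0 b)) (ha₁ : a₁ ∈ Ioc 0 b) (ha₂ : a₂ ∈ Ioc 0 b)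
    (h₁ : 2 * a₁ + γ₁ * g a₁ = 0) (h₂ : 2 * a₂ + γ₂ * g a₂ = 0) : a₁ ≤ a₂ := by
  by_contra! hlt
  have hg : g a₂ ≤ g a₁ := hmono ha₂ ha₁ hlt.le
  nlinarith [mul_le_mul_of_nonneg_left hg (mul_pos hγ₁ (hγ₁.trans_le hγ)).le,
    mul_le_mul_of_nonneg_left hγ ha₂.1.le]

end RealConvex

namespace Assumption4

variable {d : ℝ → ℝ → EReal} {d₁ d₂ : ℝ → ℝ → ℝ} {a b : ℝ}

theorem coe_toReal (hA4 : Assumption4 d d₁ d₂) (hgen : GenBasic d) (ha : 0 < a) (hb : 0 < b) :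
    ((d a b).toReal : EReal) = d a b :=
  EReal.coe_toReal (hA4.1 a b ha hb) (EReal.bot_lt_zero.trans_le (hgen.1 a b ha.le hb.le)).ne'

theorem self_eq_zero (hA4 : Assumption4 d d₁ d₂) (hgen : GenBasic d) (hb : 0 < b) : d b b = 0 :=
  (hgen.2.1 b b hb.le hb.le (hA4.1 b b hb hb)).2 rfl

theorem toReal_self_le (hA4 : Assumption4 d d₁ d₂) (hgen : GenBasic d) (ha : 0 ≤ a)
    (hb : 0 < b) : (d b b).toReal ≤ (d a b).toReal := by
  rw [hA4.self_eq_zero hgen hb, EReal.toReal_zero]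
  exact EReal.toReal_nonneg (hgen.1 a b ha hb.le)

theorem toReal_self_lt (hA4 : Assumption4 d d₁ d₂) (hgen : GenBasic d) (ha : 0 < a)
    (hb : 0 < b) (hab : a ≠ b) : (d b b).toReal < (d a b).toReal := by
  refine (hA4.toReal_self_le hgen ha.le hb).lt_of_ne fun h =>
    hab ((hgen.2.1 a b ha.le hb.le (hA4.1 a b ha hb)).1 ?_)
  rw [← hA4.coe_toReal hgen ha hb, ← h, hA4.self_eq_zero hgen hb, EReal.toReal_zero,
    EReal.coe_zero]

theorem convexOn_toReal (hA4 : Assumption4 d d₁ d₂) (hgen : GenBasic d) (hb : 0 < b) :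
    ConvexOn ℝ (Ioc 0 b) (fun a => (d a b).toReal) := by
  refine ⟨convex_Ioc 0 b, fun x hx y hy t u ht hu htu => ?_⟩
  have hz := convex_Ioc 0 b hx hy ht hu htu
  obtain rfl : u = 1 - t := by linarith
  have key := hA4.2.2.2.2 b hb x (Ioc_subset_Icc_self hx) y (Ioc_subset_Icc_self hy) t
    ⟨ht, by linarith⟩
  simp only [smul_eq_mul] at hz ⊢
  rw [← hA4.coe_toReal hgen hz.1 hb, ← hA4.coe_toReal hgen hx.1 hb,
    ← hA4.coe_toReal hgen hy.1 hb] at key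
  exact_mod_cast key

theorem d₁_self (hA4 : Assumption4 d d₁ d₂) (hgen : GenBasic d) (hb : 0 < b) : d₁ b b = 0 := by
  have hmin : IsLocalMin (fun t => (d t b).toReal) b := by
    filter_upwards [eventually_gt_nhds hb] with t ht
    exact hA4.toReal_self_le hgen ht.le hb
  exact hmin.hasDerivAt_eq_zero (hA4.2.1 b b hb hb)

theorem monotoneOn_d₁ (hA4 : Assumption4 d d₁ d₂) (hgen : GenBasic d) (hb : 0 < b) :
    MonotoneOn (fun a => d₁ a b) (Ioc 0 b) :=
  (hA4.convexOn_toReal hgen hb).monotoneOn_of_hasDerivAt fun a ha => hA4.2.1 a b ha.1 hb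

theorem continuousOn_d₁ (hA4 : Assumption4 d d₁ d₂) (hb : 0 < b) :
    ContinuousOn (fun a => d₁ a b) (Ioc 0 b) :=
  fun a ha => (hA4.2.2.1 a b ha.1 hb).continuousAt.continuousWithinAt

theorem d₁_neg (hA4 : Assumption4 d d₁ d₂) (hgen : GenBasic d) (ha : a ∈ Ioo 0 b) :
    d₁ a b < 0 := by
  have hb : 0 < b := ha.1.trans ha.2
  exact (hA4.convexOn_toReal hgen hb).neg_of_hasDerivAt_of_lt_right (Ioo_subset_Ioc_self ha)
    (right_mem_Ioc.2 hb) ha.2 (hA4.toReal_self_lt hgen ha.1 hb ha.2.ne) (hA4.2.1 a b ha.1 hb)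

end Assumption4

namespace EigenMapSpec

variable {d : ℝ → ℝ → EReal} {d₁ d₂ s : ℝ → ℝ → ℝ} {b γ : ℝ}

theorem mem_Ioo (hs : EigenMapSpec d₁ s) (hA4 : Assumption4 d d₁ d₂) (hgen : GenBasic d)
    (hγ : 0 < γ) (hb : 0 < b) : s γ b ∈ Ioo 0 b := by
  obtain ⟨r, hr, hr0⟩ := exists_mem_Ioo_two_mul_add_mul_eq_zero hγ
    (c := b / 2) ⟨by linarith, by linarith⟩ (hA4.continuousOn_d₁ hb) (hA4.monotoneOn_d₁ hgen hb)
    (hA4.d₁_neg hgen ⟨by linarith, by linarith⟩) (hA4.d₁_self hgen hb).ge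
  rwa [← (hs.2 γ b hγ hb).2.2 r hr.1.le hr0]

theorem antitoneOn_divergence (hs : EigenMapSpec d₁ s) (hA4 : Assumption4 d d₁ d₂)
    (hgen : GenBasic d) (hb : 0 ≤ b) : AntitoneOn (fun γ => d (s γ b) b) (Ioi 0) := by
  intro γ₁ hγ₁ γ₂ hγ₂ hγ
  rcases hb.eq_or_lt with rfl | hb
  · simp only [hs.1 _ 0 (Or.inr rfl), le_refl]
  have h₁ := Ioo_subset_Ioc_self (hs.mem_Ioo hA4 hgen hγ₁ hb)
  have h₂ := Ioo_subset_Ioc_self (hs.mem_Ioo hA4 hgen hγ₂ hb)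
  have hle : s γ₁ b ≤ s γ₂ b := le_of_two_mul_add_mul_eq_zero hγ₁ hγ
    (hA4.monotoneOn_d₁ hgen hb) h₁ h₂ (hs.2 γ₁ b hγ₁ hb).2.1 (hs.2 γ₂ b hγ₂ hb).2.1
  have hanti := (hA4.convexOn_toReal hgen hb).antitoneOn_Ioc_of_le_right
    (fun a ha => hA4.toReal_self_le hgen ha.1.le hb) h₁ h₂ hle
  show d (s γ₂ b) b ≤ d (s γ₁ b) b
  rw [← hA4.coe_toReal hgen h₁.1 hb, ← hA4.coe_toReal hgen h₂.1 hb]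
  exact_mod_cast hanti

end EigenMapSpec

theorem stmt_14_general {p : ℕ}
    (d : ℝ → ℝ → EReal) (d₁ d₂ s : ℝ → ℝ → ℝ)
    (xh : Fin p → ℝ)
    (hnn : ∀ i, 0 ≤ xh i)
    (hgen : GenBasic d)
    (hA4 : Assumption4 d d₁ d₂)
    (hs : EigenMapSpec d₁ s)
    (gam : ℝ → ℝ)
    (hgam : ∀ ε : ℝ, 0 < ε → (ε : EReal) < ∑ i, d 0 (xh i) →
      0 < gam ε ∧ (∑ i, d (s (gam ε) (xh i)) (xh i)) = (ε : EReal)) :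
    AntitoneOn gam {ε : ℝ | 0 < ε ∧ (ε : EReal) < ∑ i, d 0 (xh i)} := by
  intro ε₁ hε₁ ε₂ hε₂ hε
  by_contra! hγ
  obtain ⟨hγ₁, hsum₁⟩ := hgam ε₁ hε₁.1 hε₁.2
  obtain ⟨hγ₂, hsum₂⟩ := hgam ε₂ hε₂.1 hε₂.2
  have hsum : (ε₂ : EReal) ≤ ε₁ := by
    rw [← hsum₁, ← hsum₂]
    exact Finset.sum_le_sum fun i _ => hs.antitoneOn_divergence hA4 hgen (hnn i) hγ₁ hγ₂ hγ.le
  obtain rfl : ε₁ = ε₂ := le_antisymm hε (EReal.coe_le_coe_iff.1 hsum)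
  exact hγ.false

/-- Lemma: monotonicity of the inverse shrinkage intensity `γ*`.
Under Assumptions 2, 3(a) and 4 for the generator, if for each `ε ∈ (0,ε̄)` (where
`ε̄ = Σᵢ d(0,x̂ᵢ)`), `γ*(ε)` denotes the unique positive root of
`Σᵢ d(s(γ,x̂ᵢ),x̂ᵢ) = ε`, then `ε ↦ γ*(ε)` is non-increasing on `(0,ε̄)`. -/
theorem stmt_14 {p : ℕ}
    (d : ℝ → ℝ → EReal) (d₁ d₂ s : ℝ → ℝ → ℝ)
    (xh : Fin p → ℝ)
    (hmono : Monotone xh) (hnn : ∀ i, 0 ≤ xh i)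
    (hgen : GenBasic d)
    (hA3a : ∀ i, d (xh i) (xh i) ≠ ⊤)
    (hA4 : Assumption4 d d₁ d₂)
    (hs : EigenMapSpec d₁ s)
    (gam : ℝ → ℝ)
    (hgam : ∀ ε : ℝ, 0 < ε → (ε : EReal) < ∑ i, d 0 (xh i) →
      0 < gam ε ∧ (∑ i, d (s (gam ε) (xh i)) (xh i)) = (ε : EReal)) :
    AntitoneOn gam {ε : ℝ | 0 < ε ∧ (ε : EReal) < ∑ i, d 0 (xh i)} :=
  stmt_14_general d d₁ d₂ s xh hnn hgen hA4 hs gam hgam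
end
end

section
/- Let D be the Wasserstein divergence, let Σ̂ ∈ 𝕊₊ᵖ have eigenvalues x̂₁ ≤ … ≤ x̂_p and eigendecomposition Σ̂ = V̂ Diag(x̂) V̂ᵀ, and let ε ∈ (0, Tr(Σ̂)). Then the primal problem (CSE) is uniquely solved by X* = V̂ Diag(x*) V̂ᵀ with x*_i = s(γ*, x̂_i), where the eigenvalue map is s(γ,b) = ( t^{1/3} − (γ/6)·t^{−1/3} )² with t = (γ/4)(√b + √(b + 2γ/27)) (for γ,b > 0 this is the unique positive a with 2a + γ(1 − √(b/a)) = 0, and it lies in (0,b)), and the inverse shrinkage intensity γ* is the unique positive solution of ε − Σ_{i=1}^p (√x̂_i − √(s(γ*, x̂_i)))² = 0; moreover γ* ≤ γ_W := 2√(p·x̂_p³/ε). -/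
/-!
For `γ > 0`, `u = √(sW γ b)` is the root of Cardano's cubic `2u³ + γu = γ√b`, which is the
stationarity condition `2a + γ ∂ₐd(a,b) = 0` of `a² + (γ/2) d(a,b)`. The map
`γ ↦ D(X*(γ), Σ̂) = ∑ᵢ (√x̂ᵢ - √s(γ,x̂ᵢ))²` decreases continuously from `Tr Σ̂` at `γ = 0` to `0`
(it is at most `4 ∑ x̂ᵢ³ / γ²`), which gives `γ*` and the bound `γ* ≤ γ_W`.

Optimality of `X* = X*(γ*)` is a saddle-point argument. Weak duality with multiplier `γ*/2`,
together with `2 Tr √M ≤ Tr(M N) + Tr N⁻¹` for `N` diagonal in the eigenbasis of `Σ̂`, shows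
`Tr X*² ≤ Tr(S X*)` for every `S` in the Wasserstein ball. Hence the worst case loss of `X*` is
`-Tr X*²`, while that of any `X` is at least `‖X - X*‖²_F - Tr X*²`.
-/

open Matrix Set Filter MeasureTheory
open scoped BigOperators Classical

noncomputable section

/-- Positive semidefinite square root (junk value `0` off the PSD cone). -/
def msqrt {p : ℕ} (A : Mat p) : Mat p :=
  if h : A.PosSemidef then
    (h.1.eigenvectorUnitary : Mat p) * Matrix.diagonal ((↑) ∘ Real.sqrt ∘ h.1.eigenvalues) *
      (star h.1.eigenvectorUnitary : Mat p)
  else 0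

/-- Eigenvalues of a symmetric matrix (junk value `0` if not symmetric). -/
def symEig {p : ℕ} (A : Mat p) : Fin p → ℝ :=
  if h : A.IsHermitian then h.eigenvalues else 0

/-- The Wasserstein divergence between covariance matrices:
`D(Σ₁,Σ₂) = Tr Σ₁ + Tr Σ₂ − 2 Tr((Σ₂^{1/2} Σ₁ Σ₂^{1/2})^{1/2})` for positive
semidefinite arguments, `+∞` otherwise. -/
def DW {p : ℕ} (S1 S2 : Mat p) : EReal :=
  if S1.PosSemidef ∧ S2.PosSemidef then
    ((S1.trace + S2.trace - 2 * (msqrt (msqrt S2 * S1 * msqrt S2)).trace : ℝ) : EReal)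
  else ⊤

/-- The eigenvalue map of the Wasserstein divergence. -/
def sW (γ b : ℝ) : ℝ :=
  ((((γ / 4) * (Real.sqrt b + Real.sqrt (b + 2 * γ / 27))) ^ ((1 : ℝ) / 3))
    - (γ / 6) * (((γ / 4) * (Real.sqrt b + Real.sqrt (b + 2 * γ / 27))) ^ (-(1 : ℝ) / 3))) ^ 2

open Real Topology

section EigenvalueMap

variable {γ b : ℝ}

lemma sW_nonneg (γ b : ℝ) : 0 ≤ sW γ b := sq_nonneg _

@[simp] lemma sW_zero_left (b : ℝ) : sW 0 b = 0 := by simp [sW]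

/-- `sW` is Cardano's formula for this cubic. -/
lemma exists_sW_eq_sq (hγ : 0 < γ) (hb : 0 ≤ b) :
    ∃ u : ℝ, 0 ≤ u ∧ sW γ b = u ^ 2 ∧ 2 * u ^ 3 + γ * u = γ * √b := by
  set t : ℝ := γ / 4 * (√b + √(b + 2 * γ / 27)) with ht_def
  have ht : 0 < t := by
    have : 0 < √(b + 2 * γ / 27) := sqrt_pos.2 (by linarith)
    positivity
  -- `t` is the positive root of `t² - (γ√b/2) t - γ³/216`
  have ht2 : t ^ 2 = γ * √b / 2 * t + γ ^ 3 / 216 := by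
    rw [ht_def]
    linear_combination (γ ^ 2 / 16) * sq_sqrt (by linarith : 0 ≤ b + 2 * γ / 27) -
      (γ ^ 2 / 16) * sq_sqrt hb
  set c : ℝ := t ^ ((1 : ℝ) / 3)
  have hc : 0 < c := rpow_pos_of_pos ht _
  have hc3 : c ^ 3 = t := by
    rw [← rpow_natCast, ← rpow_mul ht.le]; norm_num
  have hc_inv : t ^ (-(1 : ℝ) / 3) = c⁻¹ := by
    rw [← rpow_neg ht.le]; norm_num
  have hc6 : (c ^ 2) ^ 3 = γ * √b / 2 * c ^ 3 + (γ / 6) ^ 3 := by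
    rw [← pow_mul, show 2 * 3 = 3 * 2 from rfl, pow_mul, hc3, ht2]; ring
  have hc2 : γ / 6 ≤ c ^ 2 := by
    refine le_of_pow_le_pow_left₀ three_ne_zero (sq_nonneg c) ?_
    rw [hc6]
    have : 0 ≤ γ * √b / 2 * c ^ 3 := by positivity
    linarith
  refine ⟨c - γ / 6 * c⁻¹, ?_, by rw [sW, hc_inv], ?_⟩
  · rw [sub_nonneg, ← div_eq_mul_inv, div_le_iff₀ hc]
    nlinarith
  · have hcu : (c - γ / 6 * c⁻¹) * c = c ^ 2 - γ / 6 := by field_simp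
    have : (2 * (c - γ / 6 * c⁻¹) ^ 3 + γ * (c - γ / 6 * c⁻¹) - γ * √b) * c ^ 3 = 0 := by
      linear_combination (2 * (((c - γ / 6 * c⁻¹) * c) ^ 2 + (c - γ / 6 * c⁻¹) * c *
        (c ^ 2 - γ / 6) + (c ^ 2 - γ / 6) ^ 2) + γ * c ^ 2) * hcu + 2 * hc6
    have := (mul_eq_zero.1 this).resolve_right (by positivity)
    linarith

lemma sW_cubic (hγ : 0 < γ) (hb : 0 ≤ b) : (2 * sW γ b + γ) * √(sW γ b) = γ * √b := by
  obtain ⟨u, hu, hs, hcubic⟩ := exists_sW_eq_sq hγ hb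
  rw [hs, sqrt_sq hu]
  linear_combination hcubic

lemma strictMonoOn_two_mul_add_mul_sqrt (hγ : 0 ≤ γ) :
    StrictMonoOn (fun a => (2 * a + γ) * √a) (Ici 0) := by
  intro a ha a' ha' h
  have := sqrt_lt_sqrt ha h
  have := sqrt_nonneg a
  simp only
  nlinarith [mem_Ici.1 ha]

lemma eq_sW_iff {a : ℝ} (hγ : 0 < γ) (hb : 0 ≤ b) (ha : 0 ≤ a) :
    a = sW γ b ↔ (2 * a + γ) * √a = γ * √b := by
  rw [← sW_cubic hγ hb]
  exact ((strictMonoOn_two_mul_add_mul_sqrt hγ.le).injOn.eq_iff ha (sW_nonneg γ b)).symm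

lemma sW_zero_right (hγ : 0 < γ) : sW γ 0 = 0 :=
  ((eq_sW_iff hγ le_rfl le_rfl).2 (by simp)).symm

lemma sW_le (hγ : 0 < γ) (hb : 0 ≤ b) : sW γ b ≤ b := by
  refine (strictMonoOn_two_mul_add_mul_sqrt hγ.le).le_iff_le (sW_nonneg γ b) hb |>.1 ?_
  simp only [sW_cubic hγ hb]
  nlinarith [sqrt_nonneg b]

lemma sW_lt (hγ : 0 < γ) (hb : 0 < b) : sW γ b < b := by
  refine (strictMonoOn_two_mul_add_mul_sqrt hγ.le).lt_iff_lt (sW_nonneg γ b) hb.le |>.1 ?_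
  simp only [sW_cubic hγ hb.le]
  nlinarith [sqrt_pos.2 hb]

lemma sW_pos (hγ : 0 < γ) (hb : 0 < b) : 0 < sW γ b := by
  refine (sW_nonneg γ b).lt_of_ne fun h => ?_
  have := sW_cubic hγ hb.le
  rw [← h, sqrt_zero, mul_zero] at this
  nlinarith [sqrt_pos.2 hb]

/-- `1 - √(b/a)` is `∂ₐd(a,b)` for the Wasserstein generator `d(a,b) = a + b - 2√(ab)`. -/
lemma stationary_iff {a : ℝ} (ha : 0 < a) (hb : 0 ≤ b) :
    2 * a + γ * (1 - √(b / a)) = 0 ↔ (2 * a + γ) * √a = γ * √b := by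
  have := sqrt_pos.2 ha
  rw [sqrt_div hb, ← mul_left_inj' this.ne']
  constructor <;> intro h
  · field_simp at h
    linarith
  · field_simp
    linarith

lemma sW_strictMonoOn (hb : 0 < b) : StrictMonoOn (fun γ => sW γ b) (Ioi 0) := by
  intro γ₁ h₁ γ₂ h₂ h
  simp only [mem_Ioi] at h₁ h₂ ⊢
  by_contra! hle
  have hmono := (strictMonoOn_two_mul_add_mul_sqrt h₂.le).monotoneOn (sW_nonneg γ₂ b)
    (sW_nonneg γ₁ b) hle
  simp only [sW_cubic h₂ hb.le] at hmono
  have hk := sW_cubic h₁ hb.le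
  have := sqrt_lt_sqrt (sW_nonneg γ₁ b) (sW_lt h₁ hb)
  -- `(2 s₁ + γ₂)√s₁ = γ₁√b + (γ₂ - γ₁)√s₁ < γ₂√b`
  nlinarith

lemma sq_sqrt_sub_sqrt_sW (hγ : 0 < γ) (hb : 0 ≤ b) :
    (√b - √(sW γ b)) ^ 2 = 4 * sW γ b ^ 3 / γ ^ 2 := by
  have hk := sW_cubic hγ hb
  have hs := sq_sqrt (sW_nonneg γ b)
  have : √b - √(sW γ b) = 2 * sW γ b * √(sW γ b) / γ := by
    field_simp; linarith
  rw [this, div_pow, mul_pow, mul_pow, hs]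
  ring

lemma four_mul_sW_cube_le (hγ : 0 ≤ γ) (hb : 0 ≤ b) : 4 * sW γ b ^ 3 ≤ γ ^ 2 * b := by
  rcases hγ.eq_or_lt with rfl | hγ
  · simp
  have h := sq_sqrt_sub_sqrt_sW hγ hb
  have : (√b - √(sW γ b)) ^ 2 ≤ b := by
    have := sqrt_le_sqrt (sW_le hγ hb)
    nlinarith [sqrt_nonneg (sW γ b), sq_sqrt hb]
  rw [h, div_le_iff₀ (by positivity)] at this
  linarith

end EigenvalueMap

section EigenvalueMapContinuity

variable {b : ℝ}

lemma continuousAt_sW {γ : ℝ} (hγ : 0 < γ) (hb : 0 ≤ b) :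
    ContinuousAt (fun γ => sW γ b) γ := by
  have ht : 0 < γ / 4 * (√b + √(b + 2 * γ / 27)) := by
    have : 0 < √(b + 2 * γ / 27) := sqrt_pos.2 (by linarith)
    positivity
  unfold sW
  fun_prop (disch := exact Or.inl ht.ne')

lemma continuousWithinAt_sW_zero (hb : 0 ≤ b) :
    ContinuousWithinAt (fun γ => sW γ b) (Ici 0) 0 := by
  have hbound : ∀ γ ∈ Ici (0 : ℝ), sW γ b ≤ (γ ^ 2 * b / 4) ^ ((1 : ℝ) / 3) := fun γ hγ =>
    calc sW γ b = (sW γ b ^ 3) ^ ((1 : ℝ) / 3) := by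
          rw [← rpow_natCast, ← rpow_mul (sW_nonneg γ b)]; norm_num
      _ ≤ (γ ^ 2 * b / 4) ^ ((1 : ℝ) / 3) :=
          rpow_le_rpow (pow_nonneg (sW_nonneg γ b) 3) (by linarith [four_mul_sW_cube_le hγ hb])
            (by norm_num)
  have hlim : ContinuousWithinAt (fun γ : ℝ => (γ ^ 2 * b / 4) ^ ((1 : ℝ) / 3)) (Ici 0) 0 :=
    (by fun_prop (disch := norm_num) : Continuous _).continuousWithinAt
  simp only [ContinuousWithinAt, sW_zero_left] at hlim ⊢
  refine squeeze_zero' (Eventually.of_forall fun γ => sW_nonneg γ b)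
    (eventually_nhdsWithin_of_forall hbound) ?_
  simpa using hlim

lemma continuousOn_sW (hb : 0 ≤ b) : ContinuousOn (fun γ => sW γ b) (Ici 0) := by
  intro γ hγ
  rcases (mem_Ici.1 hγ).eq_or_lt with rfl | hγ
  · exact continuousWithinAt_sW_zero hb
  · exact (continuousAt_sW hγ hb).continuousWithinAt

end EigenvalueMapContinuity

/-- `D(X*(γ), Σ̂)` written in the eigenbasis of `Σ̂` (see `DW_conjDiag`). -/
def shrinkDist {ι : Type*} [Fintype ι] (x : ι → ℝ) (γ : ℝ) : ℝ :=
  ∑ i, (√(x i) - √(sW γ (x i))) ^ 2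

section ShrinkDist

variable {ι : Type*} [Fintype ι] {x : ι → ℝ}

lemma shrinkDist_zero (hx : ∀ i, 0 ≤ x i) : shrinkDist x 0 = ∑ i, x i := by
  simp [shrinkDist, sq_sqrt (hx _)]

lemma continuousOn_shrinkDist (hx : ∀ i, 0 ≤ x i) : ContinuousOn (shrinkDist x) (Ici 0) := by
  unfold shrinkDist
  refine continuousOn_finsetSum _ fun i _ => ?_
  exact (continuousOn_const.sub (continuousOn_sW (hx i)).sqrt).pow 2

lemma shrinkDist_le {γ : ℝ} (hx : ∀ i, 0 ≤ x i) (hγ : 0 < γ) :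
    shrinkDist x γ ≤ 4 * (∑ i, x i ^ 3) / γ ^ 2 := by
  rw [Finset.mul_sum, Finset.sum_div]
  refine Finset.sum_le_sum fun i _ => ?_
  rw [sq_sqrt_sub_sqrt_sW hγ (hx i)]
  gcongr
  exacts [sW_nonneg _ _, sW_le hγ (hx i)]

lemma strictAntiOn_shrinkDist (hx : ∀ i, 0 ≤ x i) {i₀ : ι} (hi₀ : 0 < x i₀) :
    StrictAntiOn (shrinkDist x) (Ioi 0) := by
  intro γ₁ h₁ γ₂ h₂ h
  have hterm : ∀ i, 0 < x i → (√(x i) - √(sW γ₂ (x i))) ^ 2 < (√(x i) - √(sW γ₁ (x i))) ^ 2 :=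
    fun i hi => by
      have h₁₂ := sqrt_lt_sqrt (sW_nonneg _ _) (sW_strictMonoOn hi h₁ h₂ h)
      have h₂b := sqrt_lt_sqrt (sW_nonneg _ _) (sW_lt (mem_Ioi.1 h₂) hi)
      nlinarith
  refine Finset.sum_lt_sum (fun i _ => ?_) ⟨i₀, Finset.mem_univ _, hterm i₀ hi₀⟩
  rcases (hx i).eq_or_lt with hi | hi
  · simp [← hi, sW_zero_right (mem_Ioi.1 h₁), sW_zero_right (mem_Ioi.1 h₂)]
  · exact (hterm i hi).le

lemma existsUnique_shrinkDist_eq {ε : ℝ} (hx : ∀ i, 0 ≤ x i) (hε : 0 < ε)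
    (hεx : ε < ∑ i, x i) : ∃! γ, 0 < γ ∧ shrinkDist x γ = ε := by
  obtain ⟨i₀, hi₀⟩ : ∃ i, 0 < x i := by
    by_contra! h
    linarith [Finset.sum_nonpos fun i (_ : i ∈ Finset.univ) => h i]
  set K := ∑ i, x i ^ 3
  have hK : 0 ≤ K := Finset.sum_nonneg fun i _ => pow_nonneg (hx i) 3
  set γhi := 4 * K / ε + 1
  have hγhi : 0 < γhi := by positivity
  have hhi : shrinkDist x γhi ≤ ε := by
    refine (shrinkDist_le hx hγhi).trans ?_
    rw [div_le_iff₀ (by positivity), ← div_le_iff₀' hε]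
    nlinarith [show 0 ≤ 4 * K / ε by positivity]
  obtain ⟨γ, hγ, hγε⟩ := intermediate_value_Icc' hγhi.le
    ((continuousOn_shrinkDist hx).mono Icc_subset_Ici_self)
    ⟨hhi, (shrinkDist_zero hx).symm ▸ hεx.le⟩
  have hγ0 : 0 < γ := hγ.1.lt_of_ne <| by
    rintro rfl
    rw [shrinkDist_zero hx] at hγε
    linarith
  exact ⟨γ, ⟨hγ0, hγε⟩, fun γ' ⟨hγ', hγ'ε⟩ =>
    (strictAntiOn_shrinkDist hx hi₀).injOn hγ' hγ0 (hγ'ε.trans hγε.symm)⟩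

lemma le_of_shrinkDist_eq {ε γ B : ℝ} (hx : ∀ i, 0 ≤ x i) (hxB : ∀ i, x i ≤ B) (hε : 0 < ε)
    (hγ : 0 < γ) (hγε : shrinkDist x γ = ε) :
    γ ≤ 2 * √(Fintype.card ι * B ^ 3 / ε) := by
  have hsum : ∑ i, x i ^ 3 ≤ Fintype.card ι * B ^ 3 := by
    simpa using Finset.sum_le_sum fun i (_ : i ∈ Finset.univ) =>
      pow_le_pow_left₀ (hx i) (hxB i) 3
  have hle := hγε ▸ shrinkDist_le hx hγ
  have hsq : γ ^ 2 ≤ 2 ^ 2 * (Fintype.card ι * B ^ 3 / ε) := by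
    rw [le_div_iff₀ (by positivity)] at hle
    rw [mul_div_assoc', le_div_iff₀ hε]
    linarith
  calc γ = √(γ ^ 2) := (sqrt_sq hγ.le).symm
    _ ≤ √(2 ^ 2 * (Fintype.card ι * B ^ 3 / ε)) := sqrt_le_sqrt hsq
    _ = 2 * √(Fintype.card ι * B ^ 3 / ε) := by rw [sqrt_mul (by norm_num), sqrt_sq (by norm_num)]

end ShrinkDist

section ConjDiag

variable {p : ℕ} {V : Mat p}

def conjDiag (V : Mat p) (a : Fin p → ℝ) : Mat p := V * diagonal a * Vᵀ

lemma IsOrthoMat.transpose_mul (hV : IsOrthoMat V) : Vᵀ * V = 1 := mul_eq_one_comm.1 hV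

lemma conjDiag_mul_conjDiag (hV : IsOrthoMat V) (a b : Fin p → ℝ) :
    conjDiag V a * conjDiag V b = conjDiag V (a * b) := by
  simp only [conjDiag, Matrix.mul_assoc, ← Matrix.mul_assoc Vᵀ, hV.transpose_mul,
    Matrix.one_mul, ← Matrix.mul_assoc (diagonal a), diagonal_mul_diagonal]
  rfl

lemma conjDiag_one (hV : IsOrthoMat V) : conjDiag V 1 = 1 := by
  rw [conjDiag, Pi.one_def, diagonal_one, Matrix.mul_one]
  exact hV

lemma conjDiag_transpose (a : Fin p → ℝ) : (conjDiag V a)ᵀ = conjDiag V a := by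
  simp [conjDiag, Matrix.mul_assoc]

lemma trace_conjDiag (hV : IsOrthoMat V) (a : Fin p → ℝ) :
    (conjDiag V a).trace = ∑ i, a i := by
  rw [conjDiag, trace_mul_cycle, hV.transpose_mul, Matrix.one_mul, trace_diagonal]

lemma trace_mul_conjDiag (S : Mat p) (a : Fin p → ℝ) :
    (S * conjDiag V a).trace = ∑ i, (Vᵀ * S * V) i i * a i := by
  rw [conjDiag, ← Matrix.mul_assoc, trace_mul_cycle, ← Matrix.mul_assoc]
  simp [trace, mul_diagonal]

lemma trace_eq_sum_conj (hV : IsOrthoMat V) (S : Mat p) : S.trace = ∑ i, (Vᵀ * S * V) i i := by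
  simpa [conjDiag_one hV] using trace_mul_conjDiag (V := V) S 1

lemma posSemidef_conjDiag_iff (hV : IsOrthoMat V) {a : Fin p → ℝ} :
    (conjDiag V a).PosSemidef ↔ ∀ i, 0 ≤ a i := by
  have hconj : ∀ M : Mat p, Vᵀ * (V * M * Vᵀ) * V = M := fun M => by
    simp only [Matrix.mul_assoc, hV.transpose_mul, Matrix.mul_one, ← Matrix.mul_assoc Vᵀ,
      Matrix.one_mul]
  rw [← posSemidef_diagonal_iff]
  constructor <;> intro h
  · simpa [conjTranspose_eq_transpose_of_trivial, conjDiag, hconj] using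
      h.conjTranspose_mul_mul_same V
  · simpa [conjTranspose_eq_transpose_of_trivial, conjDiag] using h.mul_mul_conjTranspose_same V

end ConjDiag

section MatrixSqrt

open scoped MatrixOrder

variable {p : ℕ} {A B : Mat p}

lemma frobSq_nonneg (A : Mat p) : 0 ≤ frobSq A := by
  simpa [frobSq, conjTranspose_eq_transpose_of_trivial] using
    (posSemidef_conjTranspose_mul_self A).trace_nonneg

lemma frobSq_eq_zero_iff : frobSq A = 0 ↔ A = 0 := by
  simpa [frobSq, conjTranspose_eq_transpose_of_trivial] using
    trace_conjTranspose_mul_self_eq_zero_iff (A := A)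

lemma Matrix.PosSemidef.isSymm (hA : A.PosSemidef) : A.IsSymm :=
  isHermitian_iff_isSymm.1 hA.isHermitian

lemma msqrt_eq_cfcSqrt (hA : A.PosSemidef) : msqrt A = CFC.sqrt A := by
  rw [msqrt, dif_pos hA, CFC.sqrt_eq_cfc, cfc_nnreal_eq_real _ A hA.nonneg, hA.1.cfc_eq,
    IsHermitian.cfc, Unitary.conjStarAlgAut_apply]
  congr 3
  funext i
  simp [Real.coe_sqrt, hA.eigenvalues_nonneg i]

lemma msqrt_posSemidef (hA : A.PosSemidef) : (msqrt A).PosSemidef := by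
  rw [msqrt_eq_cfcSqrt hA]
  exact nonneg_iff_posSemidef.1 (CFC.sqrt_nonneg A)

lemma msqrt_mul_self (hA : A.PosSemidef) : msqrt A * msqrt A = A := by
  rw [msqrt_eq_cfcSqrt hA]
  exact CFC.sqrt_mul_sqrt_self A hA.nonneg

lemma msqrt_eq_of_mul_self (hB : B.PosSemidef) (h : B * B = A) : msqrt A = B := by
  have hA : A.PosSemidef := by
    have := posSemidef_conjTranspose_mul_self B
    rwa [hB.isHermitian.eq, h] at this
  rw [msqrt_eq_cfcSqrt hA]
  exact (CFC.sqrt_eq_iff A B hA.nonneg hB.nonneg).2 h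

lemma msqrt_conjDiag {V : Mat p} (hV : IsOrthoMat V) {a : Fin p → ℝ} (ha : ∀ i, 0 ≤ a i) :
    msqrt (conjDiag V a) = conjDiag V (fun i => √(a i)) := by
  refine msqrt_eq_of_mul_self ((posSemidef_conjDiag_iff hV).2 fun i => sqrt_nonneg _) ?_
  rw [conjDiag_mul_conjDiag hV]
  congr 1
  funext i
  exact mul_self_sqrt (ha i)

/-- Expanding `‖√M P - P'‖²_F ≥ 0`; with `P = N^{1/2}`, `P' = N^{-1/2}` this is
`2 Tr √M ≤ Tr(M N) + Tr(N⁻¹)`. -/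
lemma two_mul_trace_msqrt_le {M P P' : Mat p} (hM : M.PosSemidef) (hP : P.IsSymm)
    (hP' : P'.IsSymm) (hPP' : P * P' = 1) :
    2 * (msqrt M).trace ≤ (M * (P * P)).trace + (P' * P').trace := by
  set R := msqrt M
  have hR : R.IsSymm := (msqrt_posSemidef hM).isSymm
  have hP'P : P' * P = 1 := mul_eq_one_comm.1 hPP'
  have h := frobSq_nonneg (R * P - P')
  have hexp : (R * P - P')ᵀ * (R * P - P')
      = P * (R * R) * P - P * R * P' - P' * R * P + P' * P' := by
    rw [transpose_sub, transpose_mul, hR.eq, hP.eq, hP'.eq]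
    noncomm_ring
  rw [frobSq, hexp, trace_add, trace_sub, trace_sub, trace_mul_cycle P (R * R) P,
    trace_mul_cycle P R P', trace_mul_cycle P' R P, hP'P, hPP', Matrix.one_mul,
    msqrt_mul_self hM, trace_mul_comm] at h
  linarith

end MatrixSqrt

section Wasserstein

variable {p : ℕ} {V : Mat p} {x : Fin p → ℝ}

lemma DW_conjDiag (hV : IsOrthoMat V) {a : Fin p → ℝ} (ha : ∀ i, 0 ≤ a i) (hx : ∀ i, 0 ≤ x i) :
    DW (conjDiag V a) (conjDiag V x) = ((∑ i, (√(a i) - √(x i)) ^ 2 : ℝ) : EReal) := by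
  have hxax : ∀ i, 0 ≤ ((fun i => √(x i)) * a * fun i => √(x i)) i := fun i => by
    simp only [Pi.mul_apply]
    have := ha i
    positivity
  rw [DW, if_pos ⟨(posSemidef_conjDiag_iff hV).2 ha, (posSemidef_conjDiag_iff hV).2 hx⟩,
    msqrt_conjDiag hV hx, conjDiag_mul_conjDiag hV, conjDiag_mul_conjDiag hV,
    msqrt_conjDiag hV hxax]
  simp only [trace_conjDiag hV, Pi.mul_apply, Finset.mul_sum, ← Finset.sum_add_distrib,
    ← Finset.sum_sub_distrib]
  congr 2
  funext i
  rw [mul_comm (√(x i)) (a i), mul_assoc, mul_self_sqrt (hx i), sqrt_mul (ha i)]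
  linear_combination -sq_sqrt (ha i) - sq_sqrt (hx i)

/-- `two_mul_trace_msqrt_le` for `M = Σ̂^{1/2} S Σ̂^{1/2}` and `N = V Diag(n) Vᵀ`. -/
lemma two_mul_trace_msqrt_conj_le (hV : IsOrthoMat V) (hx : ∀ i, 0 ≤ x i) {S : Mat p}
    (hS : S.PosSemidef) {n : Fin p → ℝ} (hn : ∀ i, 0 < n i) :
    2 * (msqrt (msqrt (conjDiag V x) * S * msqrt (conjDiag V x))).trace
      ≤ ∑ i, (Vᵀ * S * V) i i * (x i * n i) + ∑ i, (n i)⁻¹ := by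
  rw [msqrt_conjDiag hV hx]
  set Q := conjDiag V fun i => √(x i)
  set P := conjDiag V fun i => √(n i)
  set P' := conjDiag V fun i => (√(n i))⁻¹
  have hM : (Q * S * Q).PosSemidef := by
    simpa only [conjTranspose_eq_transpose_of_trivial, Q, conjDiag_transpose] using
      hS.conjTranspose_mul_mul_same Q
  have hPP' : P * P' = 1 := by
    rw [conjDiag_mul_conjDiag hV, ← conjDiag_one hV]
    congr 1
    funext i
    exact mul_inv_cancel₀ (sqrt_pos.2 (hn i)).ne'
  have hQPPQ : Q * (P * P) * Q = conjDiag V fun i => x i * n i := by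
    simp only [Q, P, conjDiag_mul_conjDiag hV]
    congr 1
    funext i
    simp only [Pi.mul_apply]
    rw [mul_self_sqrt (hn i).le, mul_comm, ← mul_assoc, mul_self_sqrt (hx i)]
  have hMPP : (Q * S * Q * (P * P)).trace = ∑ i, (Vᵀ * S * V) i i * (x i * n i) := by
    calc (Q * S * Q * (P * P)).trace = (Q * (S * Q * (P * P))).trace := by
          simp only [Matrix.mul_assoc]
      _ = (S * (Q * (P * P) * Q)).trace := by
          rw [trace_mul_comm]; simp only [Matrix.mul_assoc]
      _ = _ := by rw [hQPPQ, trace_mul_conjDiag]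
  have hP'P' : (P' * P').trace = ∑ i, (n i)⁻¹ := by
    rw [conjDiag_mul_conjDiag hV, trace_conjDiag hV]
    refine Finset.sum_congr rfl fun i _ => ?_
    rw [Pi.mul_apply, ← mul_inv, mul_self_sqrt (hn i).le]
  linarith [two_mul_trace_msqrt_le hM (conjDiag_transpose _) (conjDiag_transpose _) hPP']

end Wasserstein

/-- For `b > 0` the weight `n = 1 / √(b · sW γ b)` makes this hold even without the slack `η`;
for `b = 0` take `n = γ / (2η)`. -/
lemma exists_dual_weight {γ b σ η : ℝ} (hγ : 0 < γ) (hb : 0 ≤ b) (hσ : 0 ≤ σ) (hη : 0 < η) :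
    ∃ n > 0, sW γ b ^ 2 + γ / 2 * (√b - √(sW γ b)) ^ 2 - η
      ≤ σ * sW γ b + γ / 2 * (σ + b - (σ * (b * n) + n⁻¹)) := by
  rcases hb.eq_or_lt with rfl | hb
  · refine ⟨γ / (2 * η), by positivity, ?_⟩
    rw [sW_zero_right hγ, inv_div, sqrt_zero]
    field_simp
    nlinarith [mul_nonneg hγ.le hσ]
  set s := sW γ b
  have hs : 0 < s := sW_pos hγ hb
  have hu : 0 < √s := sqrt_pos.2 hs
  have hv : 0 < √b := sqrt_pos.2 hb
  have hcubic : (2 * s + γ) * √s = γ * √b := sW_cubic hγ hb.le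
  refine ⟨(√b * √s)⁻¹, by positivity, ?_⟩
  have hbn : b * (√b * √s)⁻¹ = (2 * s + γ) / γ := by
    field_simp
    linear_combination -γ * sq_sqrt hb.le - √b * hcubic
  have hσ' : γ / 2 * (σ * ((2 * s + γ) / γ)) = σ * s + γ / 2 * σ := by
    field_simp
  rw [hbn, inv_inv]
  nlinarith [sq_sqrt hs.le, sq_sqrt hb.le]

section Variational

variable {p : ℕ} {V : Mat p} {x : Fin p → ℝ} {γ : ℝ}

/-- Weak duality with multiplier `γ/2` for the Wasserstein ball around `V Diag(x) Vᵀ`; each zero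
eigenvalue of `V Diag(x) Vᵀ` costs a slack `η`, which is then sent to `0`. -/
lemma trace_mul_self_le_trace_mul (hV : IsOrthoMat V) (hx : ∀ i, 0 ≤ x i) (hγ : 0 < γ)
    {S : Mat p} (hS : S.PosSemidef)
    (hSD : DW S (conjDiag V x) ≤ (shrinkDist x γ : EReal)) :
    (conjDiag V (fun i => sW γ (x i)) * conjDiag V (fun i => sW γ (x i))).trace
      ≤ (S * conjDiag V (fun i => sW γ (x i))).trace := by
  set σ : Fin p → ℝ := fun i => (Vᵀ * S * V) i i
  have hσ : ∀ i, 0 ≤ σ i := fun i => by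
    simpa [σ, conjTranspose_eq_transpose_of_trivial] using
      (hS.conjTranspose_mul_mul_same V).diag_nonneg (i := i)
  rw [DW, if_pos ⟨hS, (posSemidef_conjDiag_iff hV).2 hx⟩, EReal.coe_le_coe_iff,
    trace_conjDiag hV, trace_eq_sum_conj hV S] at hSD
  rw [conjDiag_mul_conjDiag hV, trace_conjDiag hV, trace_mul_conjDiag]
  simp only [Pi.mul_apply, ← sq]
  have hbound : ∀ η > 0, ∑ i, sW γ (x i) ^ 2 - p * η ≤ ∑ i, σ i * sW γ (x i) := by
    intro η hη
    choose n hn hineq using fun i => exists_dual_weight hγ (hx i) (hσ i) hη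
    have hdual := two_mul_trace_msqrt_conj_le hV hx hS hn
    have hsum := Finset.sum_le_sum fun i (_ : i ∈ Finset.univ) => hineq i
    simp only [Finset.sum_add_distrib, Finset.sum_sub_distrib, ← Finset.mul_sum,
      Finset.sum_const, Finset.card_univ, Fintype.card_fin, nsmul_eq_mul] at hsum
    unfold shrinkDist at hSD
    nlinarith
  have hlim : Tendsto (fun η : ℝ => ∑ i, sW γ (x i) ^ 2 - p * η) (𝓝[>] 0)
      (𝓝 (∑ i, sW γ (x i) ^ 2)) := by
    have : Continuous fun η : ℝ => ∑ i, sW γ (x i) ^ 2 - p * η := by fun_prop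
    simpa using this.continuousWithinAt.tendsto (x := 0) (s := Ioi 0)
  exact le_of_tendsto hlim (eventually_nhdsWithin_of_forall hbound)

end Variational

section PrimalProblem

variable {p : ℕ} {D : Mat p → Mat p → EReal} {Sh X : Mat p} {ε : ℝ}

lemma cseLoss_add_trace_mul_self {Y : Mat p} (hX : X.IsSymm) (hY : Y.IsSymm) :
    cseLoss Y X + (X * X).trace = frobSq (Y - X) := by
  have hexp : (Y - X)ᵀ * (Y - X) = Y * Y - X * Y - Y * X + X * X := by
    rw [transpose_sub, hX.eq, hY.eq]
    noncomm_ring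
  rw [cseLoss, frobSq, hexp, trace_add, trace_sub, trace_sub, trace_mul_comm Y X]
  ring

lemma cseLoss_le_primalVal {S : Mat p} (hS : Feas D Sh ε S) :
    (cseLoss X S : EReal) ≤ primalVal D Sh ε X :=
  le_iSup (fun S : {S // Feas D Sh ε S} => (cseLoss X S.1 : EReal)) ⟨S, hS⟩

lemma isCSESol_of_forall_trace_mul_le (hX : X.PosSemidef) (hXfeas : Feas D Sh ε X)
    (hvar : ∀ S, Feas D Sh ε S → (X * X).trace ≤ (S * X).trace) :
    IsCSESol D Sh ε X ∧ ∀ Y, IsCSESol D Sh ε Y → Y = X := by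
  have hupper : primalVal D Sh ε X ≤ ((-(X * X).trace : ℝ) : EReal) :=
    iSup_le fun S => EReal.coe_le_coe_iff.2 <| by
      rw [cseLoss]; linarith [hvar S.1 S.2]
  have hlower : ∀ Y : Mat p, Y.PosSemidef →
      ((frobSq (Y - X) - (X * X).trace : ℝ) : EReal) ≤ primalVal D Sh ε Y := fun Y hY => by
    rw [← cseLoss_add_trace_mul_self hX.isSymm hY.isSymm, add_sub_cancel_right]
    exact cseLoss_le_primalVal hXfeas
  refine ⟨⟨hX, fun Y hY => hupper.trans ?_⟩, fun Y hY => ?_⟩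
  · refine le_trans ?_ (hlower Y hY)
    exact EReal.coe_le_coe_iff.2 (by linarith [frobSq_nonneg (Y - X)])
  · have h := EReal.coe_le_coe_iff.1 (((hlower Y hY.1).trans (hY.2 X hX)).trans hupper)
    exact sub_eq_zero.1 (frobSq_eq_zero_iff.1 (le_antisymm (by linarith) (frobSq_nonneg _)))

end PrimalProblem

lemma isCSESol_conjDiag_sW {p : ℕ} {V : Mat p} {x : Fin p → ℝ} {γ : ℝ} (hV : IsOrthoMat V)
    (hx : ∀ i, 0 ≤ x i) (hγ : 0 < γ) :
    IsCSESol DW (conjDiag V x) (shrinkDist x γ) (conjDiag V fun i => sW γ (x i)) ∧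
      ∀ Y, IsCSESol DW (conjDiag V x) (shrinkDist x γ) Y → Y = conjDiag V fun i => sW γ (x i) := by
  have hpsd := (posSemidef_conjDiag_iff hV).2 fun i => sW_nonneg γ (x i)
  refine isCSESol_of_forall_trace_mul_le hpsd ⟨hpsd, ?_⟩ fun S hS =>
    trace_mul_self_le_trace_mul hV hx hγ hS.1 hS.2
  simp only [DW_conjDiag hV (fun i => sW_nonneg γ (x i)) hx, shrinkDist, sub_sq_comm, le_refl]

/-- Corollary: Wasserstein covariance shrinkage estimator.
For the Wasserstein divergence with `Σ̂ ⪰ 0` and `ε ∈ (0, Tr Σ̂)`, (CSE) is uniquely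
solved by `X* = V̂ Diag(s(γ*,x̂ᵢ)) V̂ᵀ`, where for `γ,b > 0` the closed form `s(γ,b)`
is the unique positive `a` with `2a + γ(1 − √(b/a)) = 0` and lies in `(0,b)`, and `γ*`
is the unique positive solution of `ε − Σᵢ(√x̂ᵢ − √s(γ*,x̂ᵢ))² = 0`; moreover
`γ* ≤ γ_W = 2√(p·x̂ₚ³/ε)`. -/
theorem stmt_16 {p : ℕ} (hp : 0 < p)
    (Sh : Mat p) (xh : Fin p → ℝ) (Vh : Mat p) (ε : ℝ)
    (hSh : Sh.PosSemidef) (hmono : Monotone xh) (hV : IsOrthoMat Vh)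
    (hdec : Sh = Vh * Matrix.diagonal xh * Vhᵀ)
    (hε : 0 < ε) (hε' : ε < Sh.trace) :
    (∀ γ b : ℝ, 0 < γ → 0 < b →
      sW γ b ∈ Set.Ioo 0 b ∧ 2 * sW γ b + γ * (1 - Real.sqrt (b / sW γ b)) = 0 ∧
      ∀ a : ℝ, 0 < a → 2 * a + γ * (1 - Real.sqrt (b / a)) = 0 → a = sW γ b) ∧
    (∃! γ : ℝ, 0 < γ ∧
      ε - ∑ i, (Real.sqrt (xh i) - Real.sqrt (sW γ (xh i))) ^ 2 = 0) ∧
    (∀ γs : ℝ, 0 < γs →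
      ε - ∑ i, (Real.sqrt (xh i) - Real.sqrt (sW γs (xh i))) ^ 2 = 0 →
      γs ≤ 2 * Real.sqrt ((p : ℝ) * (xh ⟨p - 1, Nat.sub_lt hp Nat.one_pos⟩) ^ 3 / ε) ∧
      IsCSESol DW Sh ε (Vh * Matrix.diagonal (fun i => sW γs (xh i)) * Vhᵀ) ∧
      ∀ X : Mat p, IsCSESol DW Sh ε X →
        X = Vh * Matrix.diagonal (fun i => sW γs (xh i)) * Vhᵀ) := by
  change Sh = conjDiag Vh xh at hdec
  have hx : ∀ i, 0 ≤ xh i := (posSemidef_conjDiag_iff hV).1 (hdec ▸ hSh)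
  have hεx : ε < ∑ i, xh i := trace_conjDiag hV xh ▸ hdec ▸ hε'
  refine ⟨fun γ b hγ hb => ⟨⟨sW_pos hγ hb, sW_lt hγ hb⟩,
    (stationary_iff (sW_pos hγ hb) hb.le).2 (sW_cubic hγ hb.le),
    fun a ha h => (eq_sW_iff hγ hb.le ha.le).2 ((stationary_iff ha hb.le).1 h)⟩, ?_,
    fun γs hγs hroot => ?_⟩
  · simpa only [sub_eq_zero, eq_comm (a := ε), shrinkDist] using
      existsUnique_shrinkDist_eq hx hε hεx
  obtain rfl : shrinkDist xh γs = ε := (sub_eq_zero.1 hroot).symm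
  refine ⟨?_, hdec ▸ isCSESol_conjDiag_sW hV hx hγs⟩
  simpa using le_of_shrinkDist_eq hx (fun i => hmono (Fin.le_def.2 (Nat.le_sub_one_of_lt i.2)))
    hε hγs rfl
end
end

section
/- Let Σ̂ be a real p×p positive definite matrix and ε ≥ 0. Then the Kullback-Leibler uncertainty set { Σ positive definite : (1/2)(Tr(Σ̂⁻¹Σ) − p + log det(Σ̂ Σ⁻¹)) ≤ ε } is a convex and compact subset of the real p×p symmetric matrices. -/
open Matrix Set
open scoped BigOperators Classical

noncomputable section

/-!
Write `Σ̂ = Rᴴ R` with `R` invertible. The congruence `M ↦ Rᴴ M R` is a linear homeomorphism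
that leaves the divergence invariant, `D(Rᴴ M R, Rᴴ R) = D(M, 1)`, so it maps the uncertainty set
around `1` onto the one around `Σ̂`, and it suffices to treat `Σ̂ = 1`. There
`D(M, 1) = (tr M - p - log det M) / 2` is convex because `log det` is concave: after a congruence
reducing one matrix to `1`, this is the concavity of `log` applied to the eigenvalues of the
other. The set is closed, being `{M ⪰ 0 | exp (tr M - p - 2ε) ≤ det M}`, and bounded, because
`log det M ≤ tr M / 2` bounds the trace and the trace of a positive semidefinite matrix bounds
all of its entries.
-/

theorem log_le_half_self {x : ℝ} (hx : 0 < x) : Real.log x ≤ x / 2 := by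
  have h := Real.log_le_sub_one_of_pos (half_pos hx)
  rw [Real.log_div hx.ne' two_ne_zero] at h
  linarith [Real.log_two_lt_d9]

namespace Matrix

variable {n : Type*}

theorem convex_setOf_posDef : Convex ℝ {S : Matrix n n ℝ | S.PosDef} := by
  intro S hS T hT a b ha hb hab
  rcases ha.eq_or_lt with rfl | ha
  · simpa [show b = 1 by linarith] using hT
  exact (hS.smul ha).add_posSemidef (hT.posSemidef.smul hb)

variable [Fintype n]

theorem isClosed_setOf_posSemidef : IsClosed {M : Matrix n n ℝ | M.PosSemidef} := by
  simp only [posSemidef_iff_dotProduct_mulVec, ofPred_and, ofPred_forall]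
  refine (isClosed_eq continuous_id.matrix_conjTranspose continuous_id).inter
    (isClosed_iInter fun x => isClosed_le continuous_const ?_)
  exact continuous_const.dotProduct (continuous_id.matrix_mulVec continuous_const)

variable [DecidableEq n]

theorem PosSemidef.abs_apply_le_trace {M : Matrix n n ℝ} (hM : M.PosSemidef) (i j : n) :
    |M i j| ≤ M.trace := by
  have hsymm : M j i = M i j := by simpa using hM.1.apply i j
  have hquad : ∀ s : ℝ, 0 ≤ M i i + s * (M i j + M j i) + s ^ 2 * M j j := fun s => by
    have h := hM.dotProduct_mulVec_nonneg (Pi.single i 1 + s • Pi.single j 1)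
    simp only [mulVec_add, mulVec_smul, mulVec_single, dotProduct_add, add_dotProduct,
      dotProduct_smul, smul_dotProduct, star_trivial, single_dotProduct, MulOpposite.op_one,
      col_apply, one_mul, smul_eq_mul, one_smul] at h
    nlinarith
  have hdiag : ∀ k, M k k ≤ M.trace := fun k =>
    Finset.single_le_sum (f := fun k => M k k) (fun k _ => hM.diag_nonneg) (Finset.mem_univ k)
  rw [abs_le]
  constructor <;> nlinarith [hquad 1, hquad (-1), hdiag i, hdiag j]

theorem isCompact_setOf_posSemidef_trace_le (B : ℝ) :
    IsCompact {M : Matrix n n ℝ | M.PosSemidef ∧ M.trace ≤ B} := by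
  refine (isCompact_univ_pi fun _ => isCompact_univ_pi fun _ => isCompact_Icc (a := -B) (b := B))
    |>.of_isClosed_subset (isClosed_setOf_posSemidef.inter
      (isClosed_le continuous_id.matrix_trace continuous_const)) ?_
  rintro M ⟨hM, htr⟩ i - j -
  exact abs_le.1 ((hM.abs_apply_le_trace i j).trans htr)

open scoped ComplexOrder in
theorem PosDef.exists_isUnit_eq_star_mul {𝕜 : Type*} [RCLike 𝕜] {S : Matrix n n 𝕜}
    (hS : S.PosDef) : ∃ R : Matrix n n 𝕜, IsUnit R ∧ S = star R * R := by
  open scoped MatrixOrder in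
  obtain ⟨R, rfl⟩ := CStarAlgebra.nonneg_iff_eq_star_mul_self.mp hS.posSemidef.nonneg
  refine ⟨R, ?_, rfl⟩
  have h := hS.isUnit
  rw [isUnit_iff_isUnit_det, det_mul] at h
  exact (isUnit_iff_isUnit_det R).2 (isUnit_of_mul_isUnit_right h)

theorem exists_eq_star_mul_mul {K : Type*} [Field K] [StarRing K] {R : Matrix n n K}
    (hR : IsUnit R) (S : Matrix n n K) :
    ∃ M, S = star R * M * R := by
  refine ⟨(star R)⁻¹ * S * R⁻¹, ?_⟩
  rw [← Matrix.mul_assoc, ← Matrix.mul_assoc,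
    mul_nonsing_inv _ ((isUnit_iff_isUnit_det _).1 hR.star), Matrix.one_mul,
    Matrix.mul_assoc, nonsing_inv_mul _ ((isUnit_iff_isUnit_det _).1 hR), Matrix.mul_one]

theorem det_star_mul_mul {α : Type*} [CommRing α] [StarRing α] (R M : Matrix n n α) :
    (star R * M * R).det = (star R * R).det * M.det := by
  simp only [det_mul]
  ring

theorem IsHermitian.det_smul_one_add_smul {M : Matrix n n ℝ} (hM : M.IsHermitian) (a b : ℝ) :
    (a • 1 + b • M).det = ∏ i, (a + b * hM.eigenvalues i) := by
  have hcfc : a • 1 + b • M = cfc (fun x => a + b * x) M := by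
    rw [cfc_add .., cfc_const_mul .., cfc_id' .., cfc_const ..]
    simp [Algebra.algebraMap_eq_smul_one]
  rw [hcfc, hM.cfc_eq]
  simp [IsHermitian.cfc, -Unitary.conjStarAlgAut_apply]

theorem PosDef.log_det_eq_sum {M : Matrix n n ℝ} (hM : M.PosDef) :
    Real.log M.det = ∑ i, Real.log (hM.1.eigenvalues i) := by
  rw [hM.1.det_eq_prod_eigenvalues]
  exact Real.log_prod fun i _ => (hM.eigenvalues_pos i).ne'

theorem PosDef.log_det_le_half_trace {M : Matrix n n ℝ} (hM : M.PosDef) :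
    Real.log M.det ≤ M.trace / 2 := by
  rw [hM.log_det_eq_sum, hM.1.trace_eq_sum_eigenvalues, Finset.sum_div]
  exact Finset.sum_le_sum fun i _ => log_le_half_self (hM.eigenvalues_pos i)

theorem PosDef.mul_log_det_le_log_det_smul_one_add_smul {M : Matrix n n ℝ} (hM : M.PosDef)
    {a b : ℝ} (ha : 0 ≤ a) (hb : 0 ≤ b) (hab : a + b = 1) :
    b * Real.log M.det ≤ Real.log (a • 1 + b • M).det := by
  have hpos : ∀ i, 0 < a + b * hM.1.eigenvalues i := fun i => by
    simpa using convex_Ioi (0 : ℝ) (mem_Ioi.2 one_pos) (mem_Ioi.2 (hM.eigenvalues_pos i)) ha hb hab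
  have hterm : ∀ i, b * Real.log (hM.1.eigenvalues i) ≤ Real.log (a + b * hM.1.eigenvalues i) :=
    fun i => by
      simpa using strictConcaveOn_log_Ioi.concaveOn.2 (mem_Ioi.2 one_pos)
        (mem_Ioi.2 (hM.eigenvalues_pos i)) ha hb hab
  rw [hM.log_det_eq_sum, hM.1.det_smul_one_add_smul, Real.log_prod fun i _ => (hpos i).ne',
    Finset.mul_sum]
  exact Finset.sum_le_sum fun i _ => hterm i

theorem concaveOn_log_det :
    ConcaveOn ℝ {S : Matrix n n ℝ | S.PosDef} fun S => Real.log S.det := by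
  refine ⟨convex_setOf_posDef, ?_⟩
  rintro S (hS : S.PosDef) T (hT : T.PosDef) a b ha hb hab
  obtain ⟨R, hR, rfl⟩ := hS.exists_isUnit_eq_star_mul
  obtain ⟨M, rfl⟩ := exists_eq_star_mul_mul hR T
  have hM : M.PosDef := (IsUnit.posDef_star_left_conjugate_iff hR).1 hT
  have hconj : a • (star R * R) + b • (star R * M * R) = star R * (a • 1 + b • M) * R := by
    simp only [Matrix.mul_add, Matrix.add_mul, Matrix.mul_smul, Matrix.smul_mul, Matrix.mul_one]
  have hlog_conj : ∀ X : Matrix n n ℝ, X.PosDef →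
      Real.log (star R * X * R).det = Real.log (star R * R).det + Real.log X.det := fun X hX => by
    rw [det_star_mul_mul, Real.log_mul hS.det_pos.ne' hX.det_pos.ne']
  have hcomb : (a • 1 + b • M).PosDef := convex_setOf_posDef PosDef.one hM ha hb hab
  have hkey := hM.mul_log_det_le_log_det_smul_one_add_smul ha hb hab
  simp only [smul_eq_mul]
  rw [hconj, hlog_conj _ hcomb, hlog_conj _ hM]
  obtain rfl : a = 1 - b := by linarith
  linarith

/-- `klDiv S Sh` is `D(Σ, Σ̂)` with `Σ = S`, `Σ̂ = Sh`. -/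
def klDiv (S Sh : Matrix n n ℝ) : ℝ :=
  (1 / 2) * ((Sh⁻¹ * S).trace - Fintype.card n + Real.log (Sh * S⁻¹).det)

theorem klDiv_one (M : Matrix n n ℝ) :
    klDiv M 1 = (M.trace - Fintype.card n - Real.log M.det) / 2 := by
  rw [klDiv, inv_one, Matrix.one_mul, Matrix.one_mul, det_nonsing_inv, Ring.inverse_eq_inv',
    Real.log_inv]
  ring

theorem klDiv_star_mul_mul {R : Matrix n n ℝ} (hR : IsUnit R) (M : Matrix n n ℝ) :
    klDiv (star R * M * R) (star R * R) = klDiv M 1 := by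
  have hdR : IsUnit R.det := (isUnit_iff_isUnit_det _).1 hR
  have hdR' : IsUnit (star R).det := (isUnit_iff_isUnit_det _).1 hR.star
  have htrace : ((star R * R)⁻¹ * (star R * M * R)).trace = M.trace := by
    rw [Matrix.mul_inv_rev, Matrix.mul_assoc, ← Matrix.mul_assoc (star R)⁻¹,
      ← Matrix.mul_assoc (star R)⁻¹, nonsing_inv_mul _ hdR', Matrix.one_mul, ← Matrix.mul_assoc,
      trace_mul_comm, ← Matrix.mul_assoc, mul_nonsing_inv _ hdR, Matrix.one_mul]
  have hdet : ((star R * R) * (star R * M * R)⁻¹).det = (1 * M⁻¹).det := by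
    simp only [det_mul, det_nonsing_inv, Ring.inverse_eq_inv', one_mul, mul_inv]
    field_simp [hdR.ne_zero, hdR'.ne_zero]
  rw [klDiv, klDiv, htrace, hdet, inv_one, Matrix.one_mul, Matrix.one_mul]

theorem convexOn_klDiv_one : ConvexOn ℝ {M : Matrix n n ℝ | M.PosDef} fun M => klDiv M 1 := by
  have h := (((traceLinearMap n ℝ ℝ).convexOn convex_setOf_posDef).sub concaveOn_log_det).smul
    (c := (1 / 2 : ℝ)) (by norm_num) |>.add_const (-(Fintype.card n / 2 : ℝ))
  refine h.congr fun M _ => ?_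
  simp only [klDiv_one, traceLinearMap_apply, Pi.add_apply, Pi.sub_apply, smul_eq_mul]
  ring

theorem setOf_klDiv_one_le_eq (ε : ℝ) :
    {M : Matrix n n ℝ | M.PosDef ∧ klDiv M 1 ≤ ε} =
      {M | M.PosSemidef ∧ Real.exp (M.trace - Fintype.card n - 2 * ε) ≤ M.det} := by
  ext M
  simp only [mem_ofPred_eq, klDiv_one]
  constructor
  · rintro ⟨hM, hle⟩
    exact ⟨hM.posSemidef, (Real.le_log_iff_exp_le hM.det_pos).1 (by linarith)⟩
  · rintro ⟨hM, hle⟩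
    have hdet : 0 < M.det := (Real.exp_pos _).trans_le hle
    refine ⟨hM.posDef_iff_det_ne_zero.2 hdet.ne', ?_⟩
    linarith [(Real.le_log_iff_exp_le hdet).2 hle]

theorem convex_setOf_klDiv_one_le (ε : ℝ) :
    Convex ℝ {M : Matrix n n ℝ | M.PosDef ∧ klDiv M 1 ≤ ε} :=
  convexOn_klDiv_one.convex_le ε

theorem isCompact_setOf_klDiv_one_le (ε : ℝ) :
    IsCompact {M : Matrix n n ℝ | M.PosDef ∧ klDiv M 1 ≤ ε} := by
  refine (isCompact_setOf_posSemidef_trace_le (2 * (Fintype.card n + 2 * ε))).of_isClosed_subset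
    ?_ fun M ⟨hM, hle⟩ => ⟨hM.posSemidef, ?_⟩
  · rw [setOf_klDiv_one_le_eq]
    exact isClosed_setOf_posSemidef.inter (isClosed_le (by fun_prop) continuous_id.matrix_det)
  · rw [klDiv_one] at hle
    linarith [hM.log_det_le_half_trace]

theorem setOf_klDiv_le_eq_image {R : Matrix n n ℝ} (hR : IsUnit R) (ε : ℝ) :
    {S : Matrix n n ℝ | S.PosDef ∧ klDiv S (star R * R) ≤ ε} =
      LinearMap.mulLeftRight ℝ (star R, R) '' {M | M.PosDef ∧ klDiv M 1 ≤ ε} := by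
  ext S
  obtain ⟨M, rfl⟩ := exists_eq_star_mul_mul hR S
  simp only [mem_ofPred_eq, mem_image, LinearMap.mulLeftRight_apply]
  rw [klDiv_star_mul_mul hR, IsUnit.posDef_star_left_conjugate_iff hR]
  refine ⟨fun hM => ⟨M, hM, rfl⟩, ?_⟩
  rintro ⟨N, hN, hNM⟩
  rwa [hR.star.mul_left_cancel (hR.mul_right_cancel hNM)] at hN

theorem convex_setOf_klDiv_le {Sh : Matrix n n ℝ} (hSh : Sh.PosDef) (ε : ℝ) :
    Convex ℝ {S : Matrix n n ℝ | S.PosDef ∧ klDiv S Sh ≤ ε} := by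
  obtain ⟨R, hR, rfl⟩ := hSh.exists_isUnit_eq_star_mul
  rw [setOf_klDiv_le_eq_image hR]
  exact (convex_setOf_klDiv_one_le ε).linear_image _

theorem isCompact_setOf_klDiv_le {Sh : Matrix n n ℝ} (hSh : Sh.PosDef) (ε : ℝ) :
    IsCompact {S : Matrix n n ℝ | S.PosDef ∧ klDiv S Sh ≤ ε} := by
  obtain ⟨R, hR, rfl⟩ := hSh.exists_isUnit_eq_star_mul
  rw [setOf_klDiv_le_eq_image hR]
  exact (isCompact_setOf_klDiv_one_le ε).image (LinearMap.continuous_of_finiteDimensional _)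

end Matrix

theorem stmt_19_general {p : ℕ} (Sh : Mat p) (hSh : Sh.PosDef) (ε : ℝ) :
    Convex ℝ {S : Mat p | S.PosDef ∧
        ((1 : ℝ) / 2) * ((Sh⁻¹ * S).trace - (p : ℝ) + Real.log (Sh * S⁻¹).det) ≤ ε} ∧
    IsCompact {S : Mat p | S.PosDef ∧
        ((1 : ℝ) / 2) * ((Sh⁻¹ * S).trace - (p : ℝ) + Real.log (Sh * S⁻¹).det) ≤ ε} := by
  have hset : {S : Mat p | S.PosDef ∧
      ((1 : ℝ) / 2) * ((Sh⁻¹ * S).trace - (p : ℝ) + Real.log (Sh * S⁻¹).det) ≤ ε} =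
      {S | S.PosDef ∧ klDiv S Sh ≤ ε} := by
    simp only [klDiv, Fintype.card_fin]
  rw [hset]
  exact ⟨convex_setOf_klDiv_le hSh ε, isCompact_setOf_klDiv_le hSh ε⟩

/-- the Kullback-Leibler uncertainty set
`{Σ ≻ 0 : ½(Tr(Σ̂⁻¹Σ) − p + log det(Σ̂Σ⁻¹)) ≤ ε}` around a positive definite nominal
matrix `Σ̂` is convex and compact (in the space of real `p × p` matrices). -/
theorem stmt_19 {p : ℕ} (Sh : Mat p) (hSh : Sh.PosDef) (ε : ℝ) (hε : 0 ≤ ε) :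
    Convex ℝ {S : Mat p | S.PosDef ∧
        ((1 : ℝ) / 2) * ((Sh⁻¹ * S).trace - (p : ℝ) + Real.log (Sh * S⁻¹).det) ≤ ε} ∧
    IsCompact {S : Mat p | S.PosDef ∧
        ((1 : ℝ) / 2) * ((Sh⁻¹ * S).trace - (p : ℝ) + Real.log (Sh * S⁻¹).det) ≤ ε} :=
  stmt_19_general Sh hSh ε
end
end
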